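/- arXiv:1207.2506 — 2 statements merged into one kernel-verified Lean document; each statement's English description precedes it below -/
import Mathlib

section
/- Let k ≥ 1. Every finite connected unweighted graph G with n > k vertices and tb_k(G) ≤ ρ admits an additive (2ρ·(1+log₂ n))-spanner with at most k·(n−1)·(1+log₂ n) edges, i.e., a spanning subgraph H with at most k·(n−1)·(1+log₂ n) edges such that d_H(x,y) ≤ d_G(x,y) + 2ρ·(1+log₂ n) for all vertices x,y of G. -/
open SimpleGraph

/-- A (Robertson–Seymour) tree-decomposition of a graph `G`:
a tree `T` on an index type `I` together with bags `X i ⊆ V` such that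
every vertex is in some bag, every edge has both ends in some bag, and
for every path of `T` from `i` to `k` passing through `j`, `X i ∩ X k ⊆ X j`. -/
def IsTreeDecomp {V I : Type} (G : SimpleGraph V) (T : SimpleGraph I) (X : I → Set V) : Prop :=
  T.IsTree ∧
  (∀ v : V, ∃ i, v ∈ X i) ∧
  (∀ u v : V, G.Adj u v → ∃ i, u ∈ X i ∧ v ∈ X i) ∧
  (∀ i j k : I, ∀ p : T.Walk i k, p.IsPath → j ∈ p.support → X i ∩ X k ⊆ X j)

/-- The disk `D_r(v,G)` of radius `r` centered at `v`. -/
def disk {V : Type} (G : SimpleGraph V) (v : V) (r : ℕ) : Set V :=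
  {u | G.dist u v ≤ r}

/-- The tree-breadth of `G`: the minimum `r` such that `G` has a
tree-decomposition each bag of which is contained in a disk of radius `r`. -/
noncomputable def treeBreadth {V : Type} (G : SimpleGraph V) : ℕ :=
  sInf { r : ℕ | ∃ (I : Type) (T : SimpleGraph I) (X : I → Set V),
    IsTreeDecomp G T X ∧ ∀ i, ∃ v : V, X i ⊆ disk G v r }

/-- The `k`-tree-breadth of `G`: the minimum `r` such that `G` has a
tree-decomposition each bag of which can be covered by at most `k` disks of radius `r`. -/
noncomputable def kTreeBreadth {V : Type} (k : ℕ) (G : SimpleGraph V) : ℕ :=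
  sInf { r : ℕ | ∃ (I : Type) (T : SimpleGraph I) (X : I → Set V),
    IsTreeDecomp G T X ∧ ∀ i, ∃ s : Finset V, s.card ≤ k ∧ X i ⊆ ⋃ v ∈ s, disk G v r }

/-- The tree-length of `G`: the minimum `l` such that `G` has a
tree-decomposition each bag of which has diameter at most `l` in `G`. -/
noncomputable def treeLength {V : Type} (G : SimpleGraph V) : ℕ :=
  sInf { l : ℕ | ∃ (I : Type) (T : SimpleGraph I) (X : I → Set V),
    IsTreeDecomp G T X ∧ ∀ i, ∀ u ∈ X i, ∀ v ∈ X i, G.dist u v ≤ l }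

/-- The tree-width of `G`: the minimum `w` such that `G` has a
tree-decomposition each bag of which has at most `w + 1` vertices. -/
noncomputable def treeWidth {V : Type} (G : SimpleGraph V) : ℕ :=
  sInf { w : ℕ | ∃ (I : Type) (T : SimpleGraph I) (X : I → Set V),
    IsTreeDecomp G T X ∧ ∀ i, (X i).ncard ≤ w + 1 }

/-- `S` is a balanced separator of `G`: every connected component of
`G[V ∖ S]` has at most `|V|/2` vertices. -/
def IsBalancedSeparator {V : Type} (G : SimpleGraph V) [Fintype V] (S : Set V) : Prop :=
  ∀ C : (G.induce Sᶜ).ConnectedComponent, 2 * Nat.card C.supp ≤ Fintype.card V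

/-- The graph obtained from `G` by contracting the edge `xy`
(`y` is merged into `x`). -/
def contract {V : Type} (G : SimpleGraph V) (x y : V) : SimpleGraph {v : V // v ≠ y} where
  Adj a b := a ≠ b ∧ (G.Adj a.1 b.1 ∨ (a.1 = x ∧ G.Adj y b.1) ∨ (b.1 = x ∧ G.Adj y a.1))
  symm := by
    refine ⟨?_⟩
    rintro a b ⟨hab, h⟩
    refine ⟨hab.symm, ?_⟩
    rcases h with h | ⟨h1, h2⟩ | ⟨h1, h2⟩
    · exact Or.inl h.symm
    · exact Or.inr (Or.inr ⟨h1, h2⟩)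
    · exact Or.inr (Or.inl ⟨h1, h2⟩)
  loopless := by refine ⟨?_⟩; rintro a ⟨h, -⟩; exact h rfl

/-- A graph is chordal if every cycle of length at least four has a chord:
an edge of `G` between two vertices of the cycle that is not an edge of the cycle. -/
def IsChordal {V : Type} (G : SimpleGraph V) : Prop :=
  ∀ (v : V) (c : G.Walk v v), c.IsCycle → 4 ≤ c.length →
    ∃ x y, G.Adj x y ∧ x ∈ c.support ∧ y ∈ c.support ∧ ¬ c.toSubgraph.Adj x y

namespace Stmt13
set_option linter.unusedSectionVars false
set_option linter.unusedVariables false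
set_option maxHeartbeats 1000000
variable {V : Type}

/-- Restriction of `G` to the vertex set `P`, as a graph on `V`. -/
def res (G : SimpleGraph V) (P : Set V) : SimpleGraph V where
  Adj u v := G.Adj u v ∧ u ∈ P ∧ v ∈ P
  symm := by refine ⟨?_⟩; rintro u v ⟨h, hu, hv⟩; exact ⟨h.symm, hv, hu⟩
  loopless := by refine ⟨?_⟩; rintro u ⟨h, _⟩; exact G.irrefl h

lemma res_le (G : SimpleGraph V) (P : Set V) : res G P ≤ G := by
  rintro u v ⟨h, _⟩; exact h

lemma res_mono (G : SimpleGraph V) {P Q : Set V} (h : P ⊆ Q) : res G P ≤ res G Q := by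
  rintro u v ⟨ha, hu, hv⟩; exact ⟨ha, h hu, h hv⟩

lemma res_univ (G : SimpleGraph V) : res G Set.univ = G := by
  ext u v; simp [res]

lemma res_adj_left {G : SimpleGraph V} {P : Set V} {u v : V} (h : (res G P).Adj u v) : u ∈ P := h.2.1
lemma res_adj_right {G : SimpleGraph V} {P : Set V} {u v : V} (h : (res G P).Adj u v) : v ∈ P := h.2.2

/-- Transfer a `G`-walk into a restriction, given the support lies in `P`. -/
lemma exists_res_walk {G : SimpleGraph V} {P : Set V} {u v : V} (w : G.Walk u v)
    (h : ∀ x ∈ w.support, x ∈ P) : ∃ w' : (res G P).Walk u v, w'.length = w.length := by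
  induction w with
  | nil => exact ⟨Walk.nil, rfl⟩
  | cons ha p ih =>
    rename_i a b c
    obtain ⟨w', hw'⟩ := ih (fun x hx => h x (by simp [hx]))
    exact ⟨Walk.cons ⟨ha, h a (by simp), h b (by simp)⟩ w', congrArg (· + 1) hw'⟩

/-- Transfer a walk between restrictions. -/
lemma exists_res_walk' {G : SimpleGraph V} {P Q : Set V} {u v : V} (w : (res G P).Walk u v)
    (h : ∀ x ∈ w.support, x ∈ Q) : ∃ w' : (res G Q).Walk u v, w'.length = w.length := by
  induction w with
  | nil => exact ⟨Walk.nil, rfl⟩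
  | cons ha p ih =>
    rename_i a b c
    obtain ⟨w', hw'⟩ := ih (fun x hx => h x (by simp [hx]))
    exact ⟨Walk.cons ⟨ha.1, h a (by simp), h b (by simp)⟩ w', congrArg (· + 1) hw'⟩

lemma dist_triangle'' {H : SimpleGraph V} {u v w : V} (h1 : H.Reachable u v)
    (h2 : H.Reachable v w) : H.dist u w ≤ H.dist u v + H.dist v w := by
  obtain ⟨p, hp⟩ := h1.exists_walk_length_eq_dist
  obtain ⟨q, hq⟩ := h2.exists_walk_length_eq_dist
  calc H.dist u w ≤ (p.append q).length := SimpleGraph.dist_le _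
    _ = H.dist u v + H.dist v w := by rw [Walk.length_append, hp, hq]

/-- Connected component (within a vertex set `S0`) of a point `x`. -/
def compOf (G : SimpleGraph V) (S0 : Set V) (x : V) : Set V :=
  {y | (res G S0).Reachable x y}

lemma mem_compOf_self (G : SimpleGraph V) (S0 : Set V) (x : V) : x ∈ compOf G S0 x :=
  Reachable.refl x

lemma compOf_subset {G : SimpleGraph V} {S0 : Set V} {x : V} (hx : x ∈ S0) :
    compOf G S0 x ⊆ S0 := by
  intro y hy
  obtain ⟨w⟩ := hy
  induction w with
  | nil => exact hx
  | cons ha p ih => exact ih (res_adj_right ha)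

lemma compOf_support {G : SimpleGraph V} {S0 : Set V} {x y : V}
    (w : (res G S0).Walk x y) : ∀ z ∈ w.support, z ∈ compOf G S0 x := by
  classical
  intro z hz
  exact ⟨w.takeUntil z hz⟩

lemma reach_of_mem_compOf {G : SimpleGraph V} {S0 : Set V} {x y : V}
    (h : y ∈ compOf G S0 x) : (res G S0).Reachable x y := h

lemma compOf_closed {G : SimpleGraph V} {S0 : Set V} {x u u' : V}
    (hu : u ∈ compOf G S0 x) (ha : (res G S0).Adj u u') : u' ∈ compOf G S0 x :=
  Reachable.trans hu ⟨Walk.cons ha Walk.nil⟩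

lemma compOf_eq_of_mem {G : SimpleGraph V} {S0 : Set V} {x y : V}
    (h : y ∈ compOf G S0 x) : compOf G S0 y = compOf G S0 x := by
  ext z
  exact ⟨fun hz => Reachable.trans h hz, fun hz => Reachable.trans (Reachable.symm h) hz⟩

/-- Walks inside `compOf` lift to the component. -/
lemma exists_comp_walk {G : SimpleGraph V} {S0 : Set V} {x u v : V}
    (hu : u ∈ compOf G S0 x) (w : (res G S0).Walk u v) :
    ∃ w' : (res G (compOf G S0 x)).Walk u v, w'.length = w.length := by
  induction w with
  | nil => exact ⟨Walk.nil, rfl⟩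
  | cons ha p ih =>
    rename_i a b c
    have hb : b ∈ compOf G S0 x := compOf_closed hu ha
    obtain ⟨w', hw'⟩ := ih hb
    exact ⟨Walk.cons ⟨ha.1, hu, hb⟩ w', congrArg (· + 1) hw'⟩

lemma compOf_nice {G : SimpleGraph V} {S0 : Set V} {x : V} (hx : x ∈ S0) :
    (compOf G S0 x).Nonempty ∧
      ∀ a ∈ compOf G S0 x, ∀ b ∈ compOf G S0 x,
        (res G (compOf G S0 x)).Reachable a b := by
  refine ⟨⟨x, mem_compOf_self _ _ _⟩, ?_⟩
  intro a ha b hb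
  obtain ⟨w⟩ := Reachable.trans (Reachable.symm (reach_of_mem_compOf ha)) (reach_of_mem_compOf hb)
  obtain ⟨w', _⟩ := exists_comp_walk ha w
  exact ⟨w'⟩

section TreeLemmas

variable {I : Type} {G : SimpleGraph V} {T : SimpleGraph I} {X : I → Set V}

lemma sidelem (hT : T.IsAcyclic) {i j l x : I}
    (hij : T.Adj i j) (W1 : T.Walk j l) (h1 : i ∉ W1.support)
    (W2 : T.Walk x l) (h2 : i ∉ W2.support)
    (W3 : T.Walk x i) (h3 : j ∉ W3.support) : False := by
  classical
  have hp1j : j ∉ (W3.reverse.toPath : T.Walk i x).support := by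
    intro hc
    exact h3 (by simpa [Walk.support_reverse] using W3.reverse.support_toPath_subset hc)
  have hpAi : i ∉ ((W1.append W2.reverse).toPath : T.Walk j x).support := by
    intro hc
    have := (W1.append W2.reverse).support_toPath_subset hc
    rw [Walk.mem_support_append_iff] at this
    rcases this with h | h
    · exact h1 h
    · exact h2 (by simpa [Walk.support_reverse] using h)
  have hAB := hT.path_unique ((W1.append W2.reverse).toPath)
    ⟨Walk.cons hij.symm (W3.reverse.toPath : T.Walk i x), ((W3.reverse.toPath).2).cons hp1j⟩
  apply hpAi
  rw [hAB]
  exact List.mem_cons_of_mem _ (Walk.start_mem_support _)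

lemma bags_walk (htd : IsTreeDecomp G T X) {u : V} {a b : I} (ha : u ∈ X a) (hb : u ∈ X b)
    {j : I} (hj : u ∉ X j) : ∃ w : T.Walk a b, j ∉ w.support := by
  classical
  obtain ⟨w⟩ := htd.1.isConnected a b
  refine ⟨w.toPath, fun hjsup => hj ?_⟩
  exact htd.2.2.2 a j b w.toPath (w.toPath).2 hjsup ⟨ha, hb⟩

lemma chain_bags (htd : IsTreeDecomp G T X) {i : I} {P : Set V} {u₀ u : V}
    (w : (res G (P \ X i)).Walk u₀ u) {l : I}
    (hl : ∀ b : I, u₀ ∈ X b → ∃ wb : T.Walk b l, i ∉ wb.support) :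
    ∀ b : I, u ∈ X b → ∃ wb : T.Walk b l, i ∉ wb.support := by
  induction w with
  | nil => exact hl
  | cons ha p ih =>
    rename_i a c d
    refine ih ?_
    intro b hcb
    -- a and c share a bag bc
    obtain ⟨bc, habc, hcbc⟩ := htd.2.2.1 a c ha.1
    obtain ⟨w1, hw1⟩ := hl bc habc
    -- walk from b to bc avoiding i since c ∉ X i
    have hcXi : c ∉ X i := fun hc => ((res_adj_right ha).2 hc)
    obtain ⟨w2, hw2⟩ := bags_walk htd hcb hcbc hcXi
    refine ⟨w2.append w1, ?_⟩
    rw [Walk.mem_support_append_iff]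
    rintro (h | h)
    · exact hw2 h
    · exact hw1 h

end TreeLemmas


section Balanced

variable {I : Type} {G : SimpleGraph V} {T : SimpleGraph I} {X : I → Set V} [Fintype V]

lemma aux_bal (htd : IsTreeDecomp G T X) (P : Set V)
    (hbad : ∀ i' : I, ∃ x', x' ∈ P \ X i' ∧ P.ncard < 2 * (compOf G (P \ X i') x').ncard) :
    ∀ n N : ℕ, ∀ (i : I) (x : V) (l : I) (w : T.Walk i l), x ∈ P \ X i →
      P.ncard < 2 * (compOf G (P \ X i) x).ncard →
      (∃ y ∈ compOf G (P \ X i) x, y ∈ X l) → w.IsPath →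
      (compOf G (P \ X i) x).ncard ≤ n → w.length ≤ N → False := by
  intro n
  induction n using Nat.strong_induction_on with
  | _ n ihn =>
  intro N
  induction N using Nat.strong_induction_on with
  | _ N ihN =>
  intro i x l w hx hbig hyl hw hcn hlN
  classical
  obtain ⟨y, hyC, hyXl⟩ := hyl
  have hyD : y ∈ P \ X i := compOf_subset hx hyC
  have hlne : l ≠ i := fun hc => hyD.2 (hc ▸ hyXl)
  cases w with
  | nil => exact hlne rfl
  | cons hadj w' =>
    rename_i j
    obtain ⟨hw', hij⟩ := (Walk.cons_isPath_iff hadj w').mp hw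
    have noside : ∀ c ∈ compOf G (P \ X i) x, ∀ b : I, c ∈ X b →
        ∀ W3 : T.Walk b i, j ∉ W3.support → False := by
      intro c hc b hcb W3 h3
      have hanchor : ∀ b0 : I, y ∈ X b0 → ∃ wb : T.Walk b0 l, i ∉ wb.support :=
        fun b0 hyb0 => bags_walk htd hyb0 hyXl hyD.2
      obtain ⟨wyc⟩ :=
        Reachable.trans (Reachable.symm (reach_of_mem_compOf hyC)) (reach_of_mem_compOf hc)
      obtain ⟨W2, h2⟩ := chain_bags htd wyc hanchor b hcb
      exact sidelem htd.1.IsAcyclic hadj w' hij W2 h2 W3 h3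
    have step : ∀ u u' : V, u ∈ compOf G (P \ X i) x → (res G (P \ X j)).Adj u u' →
        u' ∈ compOf G (P \ X i) x := by
      intro u u' hu ha
      by_contra hu'
      have hu'Xi : u' ∈ X i := by
        by_contra hni
        exact hu' (compOf_closed hu ⟨ha.1, compOf_subset hx hu, ⟨ha.2.2.1, hni⟩⟩)
      obtain ⟨bc, hubc, hu'bc⟩ := htd.2.2.1 u u' ha.1
      obtain ⟨W3, h3⟩ := bags_walk htd hu'bc hu'Xi ha.2.2.2
      exact noside u hu bc hubc W3 h3
    have walkind : ∀ (a z : V) (wz : (res G (P \ X j)).Walk a z),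
        a ∈ compOf G (P \ X i) x → z ∈ compOf G (P \ X i) x := by
      intro a z wz
      induction wz with
      | nil => exact id
      | cons ha' p ih => intro haC; exact ih (step _ _ haC ha')
    by_cases hXjC : ∃ c ∈ compOf G (P \ X i) x, c ∈ X j
    · obtain ⟨x', hx', hbig'⟩ := hbad j
      have hsub : compOf G (P \ X j) x' ⊆ compOf G (P \ X i) x := by
        have hnd : ¬ Disjoint (compOf G (P \ X j) x') (compOf G (P \ X i) x) := by
          intro hdisj
          have h1 : (compOf G (P \ X j) x') ∪ (compOf G (P \ X i) x) ⊆ P := by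
            intro z hz
            rcases hz with hz | hz
            · exact (compOf_subset hx' hz).1
            · exact (compOf_subset hx hz).1
          have h2 := Set.ncard_union_eq hdisj (Set.toFinite _) (Set.toFinite _)
          have hle := Set.ncard_le_ncard h1 (Set.toFinite _)
          omega
        obtain ⟨c₀, hc₀1, hc₀2⟩ := Set.not_disjoint_iff.mp hnd
        intro z hz
        obtain ⟨wz⟩ :=
          Reachable.trans (Reachable.symm (reach_of_mem_compOf hc₀1)) (reach_of_mem_compOf hz)
        exact walkind _ _ wz hc₀2
      obtain ⟨c, hcC, hcXj⟩ := hXjC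
      have hclt : (compOf G (P \ X j) x').ncard < (compOf G (P \ X i) x).ncard := by
        apply Set.ncard_lt_ncard _ (Set.toFinite _)
        refine ⟨hsub, fun hsupset => ?_⟩
        exact (compOf_subset hx' (hsupset hcC)).2 hcXj
      obtain ⟨l'', hxl''⟩ := htd.2.1 x'
      obtain ⟨wjl⟩ := htd.1.isConnected j l''
      exact ihn (compOf G (P \ X j) x').ncard (by omega)
        (wjl.toPath : T.Walk j l'').length j x' l'' wjl.toPath hx' hbig'
        ⟨x', mem_compOf_self _ _ _, hxl''⟩ wjl.toPath.2 le_rfl le_rfl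
    · push_neg at hXjC
      have hxj : x ∈ P \ X j := ⟨hx.1, hXjC x (mem_compOf_self _ _ _)⟩
      have hEq : compOf G (P \ X j) x = compOf G (P \ X i) x := by
        apply Set.Subset.antisymm
        · intro z hz
          obtain ⟨wz⟩ := reach_of_mem_compOf hz
          exact walkind _ _ wz (mem_compOf_self _ _ _)
        · intro z hz
          obtain ⟨wz⟩ := reach_of_mem_compOf hz
          have hsupp : ∀ t ∈ wz.support, t ∈ P \ X j := by
            intro t ht
            have htC := compOf_support wz t ht
            exact ⟨(compOf_subset hx htC).1, hXjC t htC⟩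
          obtain ⟨wz', _⟩ := exists_res_walk' wz hsupp
          exact ⟨wz'⟩
      have hlen : w'.length < N := by
        have : w'.length + 1 ≤ N := by simpa [Walk.length_cons] using hlN
        omega
      refine ihN w'.length hlen j x l w' hxj ?_ ⟨y, hEq ▸ hyC, hyXl⟩ hw' ?_ le_rfl
      · rw [hEq]; exact hbig
      · rw [hEq]; exact hcn

lemma exists_balanced (htd : IsTreeDecomp G T X) (P : Set V) :
    ∃ i : I, ∀ x ∈ P \ X i, 2 * (compOf G (P \ X i) x).ncard ≤ P.ncard := by
  classical
  by_contra hc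
  push_neg at hc
  have hbad : ∀ i' : I, ∃ x', x' ∈ P \ X i' ∧ P.ncard < 2 * (compOf G (P \ X i') x').ncard := by
    intro i'
    obtain ⟨x', h1, h2⟩ := hc i'
    exact ⟨x', h1, h2⟩
  obtain ⟨i₀⟩ : Nonempty I := htd.1.isConnected.nonempty
  obtain ⟨x, hx, hbig⟩ := hbad i₀
  obtain ⟨l, hxl⟩ := htd.2.1 x
  obtain ⟨wil⟩ := htd.1.isConnected i₀ l
  exact aux_bal htd P hbad _ _ i₀ x l wil.toPath hx hbig
    ⟨x, mem_compOf_self _ _ _, hxl⟩ wil.toPath.2 le_rfl le_rfl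

end Balanced


section Parts

variable {V : Type} [Fintype V]

/-- Bundle of all data and hypotheses. -/
structure Ctx (V : Type) [Fintype V] where
  G : SimpleGraph V
  k : ℕ
  ρ : ℕ
  I : Type
  T : SimpleGraph I
  X : I → Set V
  hG : G.Connected
  htd : IsTreeDecomp G T X
  hcov : ∀ i, ∃ s : Finset V, s.card ≤ k ∧ X i ⊆ ⋃ v ∈ s, disk G v ρ

variable (S : Ctx V)

def nice (P : Set V) : Prop :=
  P.Nonempty ∧ ∀ x ∈ P, ∀ y ∈ P, (res S.G P).Reachable x y

def good (P Y : Set V) (s : Finset V) : Prop :=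
  Y ⊆ P ∧ Y.Nonempty ∧ s.card ≤ S.k ∧ (Y ⊆ ⋃ v ∈ s, disk S.G v S.ρ) ∧
    ∀ x ∈ P \ Y, 2 * (compOf S.G (P \ Y) x).ncard ≤ P.ncard

lemma exists_good {P : Set V} (hP : nice S P) :
    ∃ Ys : Set V × Finset V, good S P Ys.1 Ys.2 := by
  obtain ⟨i, hbal⟩ := exists_balanced S.htd P
  obtain ⟨s, hs1, hs2⟩ := S.hcov i
  have hPP : P \ (S.X i ∩ P) = P \ S.X i := by
    ext z
    simp only [Set.mem_diff, Set.mem_inter_iff]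
    tauto
  refine ⟨(S.X i ∩ P, s), Set.inter_subset_right, ?_, hs1,
    fun z hz => hs2 hz.1, by rw [hPP]; exact hbal⟩
  rw [Set.nonempty_iff_ne_empty]
  intro hempty
  have hempty' : S.X i ∩ P = ∅ := hempty
  obtain ⟨x₀, hx₀⟩ := hP.1
  have hPX : P \ S.X i = P := by
    ext z
    simp only [Set.mem_diff]
    refine ⟨fun h => h.1, fun h => ⟨h, fun hXz => ?_⟩⟩
    have hmem : z ∈ S.X i ∩ P := ⟨hXz, h⟩
    rw [hempty'] at hmem
    exact hmem
  have hx₀' : x₀ ∈ P \ S.X i := by rw [hPX]; exact hx₀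
  have hsub : P ⊆ compOf S.G (P \ S.X i) x₀ := by
    intro y hy
    rw [hPX]
    exact hP.2 x₀ hx₀ y hy
  have h1 := hbal x₀ hx₀'
  have h2 := Set.ncard_le_ncard hsub (Set.toFinite _)
  have h3 : 0 < P.ncard := (Set.ncard_pos (Set.toFinite _)).mpr hP.1
  omega

noncomputable def bagY (P : Set V) : Set V :=
  open Classical in if h : nice S P then (exists_good S h).choose.1 else ∅

noncomputable def ctrs (P : Set V) : Finset V :=
  open Classical in if h : nice S P then (exists_good S h).choose.2 else ∅

lemma bag_spec {P : Set V} (h : nice S P) : good S P (bagY S P) (ctrs S P) := by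
  rw [bagY, ctrs]
  rw [dif_pos h, dif_pos h]
  exact (exists_good S h).choose_spec

inductive Part : ℕ → Set V → Prop
  | top : Part 0 Set.univ
  | child {d : ℕ} {P : Set V} {x : V} : Part d P → x ∈ P \ bagY S P →
      Part (d + 1) (compOf S.G (P \ bagY S P) x)

lemma part_nice {d : ℕ} {P : Set V} (h : Part S d P) : nice S P := by
  induction h with
  | top =>
    have : Nonempty V := S.hG.nonempty
    refine ⟨Set.univ_nonempty, ?_⟩
    intro x _ y _
    rw [res_univ]
    exact S.hG.preconnected x y
  | child hP hx ih => exact compOf_nice hx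

lemma part_card {d : ℕ} {P : Set V} (h : Part S d P) : 2 ^ d * P.ncard ≤ Fintype.card V := by
  induction h with
  | top => simp [Set.ncard_univ, Nat.card_eq_fintype_card]
  | child hP hx ih =>
    rename_i d P x
    have hb := (bag_spec S (part_nice S hP)).2.2.2.2 x hx
    calc 2 ^ (d + 1) * (compOf S.G (P \ bagY S P) x).ncard
        = 2 ^ d * (2 * (compOf S.G (P \ bagY S P) x).ncard) := by ring
      _ ≤ 2 ^ d * P.ncard := Nat.mul_le_mul_left _ hb
      _ ≤ _ := ih

lemma part_disj {d : ℕ} {P Q : Set V} (hP : Part S d P) (hQ : Part S d Q) (hne : P ≠ Q) :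
    ∀ u ∈ P, ∀ v ∈ Q, u ≠ v ∧ ¬ S.G.Adj u v := by
  induction d generalizing P Q with
  | zero =>
    cases hP
    cases hQ
    exact absurd rfl hne
  | succ d ih =>
    cases hP with
    | child hP' hxP =>
      rename_i P' xP
      cases hQ with
      | child hQ' hxQ =>
        rename_i Q' xQ
        by_cases hPQ : P' = Q'
        · subst hPQ
          intro u hu v hv
          constructor
          · rintro rfl
            exact hne (((compOf_eq_of_mem hu).symm.trans (compOf_eq_of_mem hv)))
          · intro hadj
            apply hne
            have huS : u ∈ P' \ bagY S P' := compOf_subset hxP hu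
            have hvS : v ∈ P' \ bagY S P' := compOf_subset hxQ hv
            have : v ∈ compOf S.G (P' \ bagY S P') xP :=
              compOf_closed hu ⟨hadj, huS, hvS⟩
            exact ((compOf_eq_of_mem this).symm.trans (compOf_eq_of_mem hv))
        · intro u hu v hv
          exact ih hP' hQ' hPQ u (compOf_subset hxP hu).1 v (compOf_subset hxQ hv).1

lemma part_unique {d : ℕ} {P Q : Set V} {z : V} (hP : Part S d P) (hQ : Part S d Q)
    (hz : z ∈ P) (hz' : z ∈ Q) : P = Q := by
  by_contra hne
  exact (part_disj S hP hQ hne z hz z hz').1 rfl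

lemma part_anc {d : ℕ} {P : Set V} (h : Part S d P) :
    ∀ e ≤ d, ∃ Q, Part S e Q ∧ P ⊆ Q := by
  induction h with
  | top =>
    intro e he
    interval_cases e
    exact ⟨Set.univ, Part.top, subset_rfl⟩
  | child hP hx ih =>
    rename_i d P x
    intro e he
    rcases Nat.lt_or_ge e (d + 1) with h1 | h1
    · obtain ⟨Q, hQ, hsub⟩ := ih e (by omega)
      exact ⟨Q, hQ, fun z hz => hsub (compOf_subset hx hz).1⟩
    · have : e = d + 1 := le_antisymm he h1
      subst this
      exact ⟨_, Part.child hP hx, subset_rfl⟩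

lemma exists_lvl (z : V) : ∃ d P, Part S d P ∧ z ∈ P ∧ z ∈ bagY S P := by
  have H : ∀ n d P, Part S d P → z ∈ P → P.ncard ≤ n →
      ∃ d' P', Part S d' P' ∧ z ∈ P' ∧ z ∈ bagY S P' := by
    intro n
    induction n using Nat.strong_induction_on with
    | _ n ihn =>
    intro d P hP hz hn
    by_cases hb : z ∈ bagY S P
    · exact ⟨d, P, hP, hz, hb⟩
    · have hz' : z ∈ P \ bagY S P := ⟨hz, hb⟩
      have hchild : Part S (d + 1) (compOf S.G (P \ bagY S P) z) := Part.child hP hz'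
      have hlt : (compOf S.G (P \ bagY S P) z).ncard < P.ncard := by
        apply Set.ncard_lt_ncard _ (Set.toFinite _)
        refine ⟨fun t ht => (compOf_subset hz' ht).1, fun hsup => ?_⟩
        obtain ⟨y0, hy0⟩ := (bag_spec S (part_nice S hP)).2.1
        have : y0 ∈ compOf S.G (P \ bagY S P) z := hsup ((bag_spec S (part_nice S hP)).1 hy0)
        exact (compOf_subset hz' this).2 hy0
      exact ihn (compOf S.G (P \ bagY S P) z).ncard (by omega) (d+1) _ hchild
        (mem_compOf_self _ _ _) le_rfl
  exact H (Set.univ : Set V).ncard 0 Set.univ Part.top (Set.mem_univ z) le_rfl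

noncomputable def lvl (z : V) : ℕ := (exists_lvl S z).choose

noncomputable def lvlPart (z : V) : Set V := (exists_lvl S z).choose_spec.choose

lemma lvl_spec (z : V) : Part S (lvl S z) (lvlPart S z) ∧ z ∈ lvlPart S z ∧
    z ∈ bagY S (lvlPart S z) := (exists_lvl S z).choose_spec.choose_spec

lemma lvl_ge_of_mem {d : ℕ} {P : Set V} {z : V} (hP : Part S d P) (hz : z ∈ P) :
    d ≤ lvl S z := by
  by_contra hlt
  push_neg at hlt
  obtain ⟨A, hA, hsubA⟩ := part_anc S hP (lvl S z) (by omega)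
  have hAeq : A = lvlPart S z := part_unique S hA (lvl_spec S z).1 (hsubA hz) (lvl_spec S z).2.1
  obtain ⟨A', hA', hsubA'⟩ := part_anc S hP (lvl S z + 1) (by omega)
  cases hA' with
  | child hP'' hx'' =>
    rename_i P'' x''
    have hzA' : z ∈ compOf S.G (P'' \ bagY S P'') x'' := hsubA' hz
    have hzP'' : z ∈ P'' := (compOf_subset hx'' hzA').1
    have : P'' = lvlPart S z := part_unique S hP'' (lvl_spec S z).1 hzP'' (lvl_spec S z).2.1
    subst this
    exact (compOf_subset hx'' hzA').2 (lvl_spec S z).2.2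

lemma mem_part_of_le_lvl {z : V} {d : ℕ} (hd : d ≤ lvl S z) :
    ∃ P, Part S d P ∧ z ∈ P := by
  obtain ⟨Q, hQ, hsub⟩ := part_anc S (lvl_spec S z).1 d hd
  exact ⟨Q, hQ, hsub (lvl_spec S z).2.1⟩

lemma ksl {d : ℕ} {Q : Set V} (hQ : Part S d Q) {u v : V} (w : S.G.Walk u v)
    (hu : u ∈ Q) (hsup : ∀ z ∈ w.support, d ≤ lvl S z) : ∀ z ∈ w.support, z ∈ Q := by
  induction w with
  | nil =>
    intro z hz
    rw [Walk.support_nil, List.mem_singleton] at hz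
    subst hz; exact hu
  | cons ha p ih =>
    rename_i a b c
    have hb : b ∈ Q := by
      obtain ⟨R, hR, hbR⟩ := mem_part_of_le_lvl S (hsup b (by simp))
      by_cases hRQ : R = Q
      · exact hRQ ▸ hbR
      · exact absurd ha ((part_disj S hR hQ hRQ b hbR a hu).2 ∘ SimpleGraph.Adj.symm)
    intro z hz
    rw [Walk.support_cons, List.mem_cons] at hz
    rcases hz with rfl | hz
    · exact hu
    · exact ih hb (fun t ht => hsup t (by simp [ht])) z hz

end Parts


section Spanner

variable {V : Type} [Fintype V] (S : Ctx V)

noncomputable def srcs (P : Set V) (v : V) : Set V :=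
  open Classical in if v ∈ P then {v} else bagY S P ∩ disk S.G v S.ρ

lemma srcs_of_mem {P : Set V} {v : V} (hvP : v ∈ P) : srcs S P v = {v} := by
  rw [srcs, if_pos hvP]

lemma srcs_of_not_mem {P : Set V} {v : V} (hvP : v ∉ P) :
    srcs S P v = bagY S P ∩ disk S.G v S.ρ := by
  rw [srcs, if_neg hvP]

lemma srcs_subset {P : Set V} {v : V} (hP : nice S P) : srcs S P v ⊆ P := by
  by_cases hvP : v ∈ P
  · rw [srcs_of_mem S hvP]
    simpa using hvP
  · rw [srcs_of_not_mem S hvP]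
    exact fun z hz => (bag_spec S hP).1 hz.1

noncomputable def sdist (P : Set V) (v : V) (u : V) : ℕ :=
  sInf {m | ∃ σ ∈ srcs S P v, (res S.G P).dist u σ = m}

lemma sdist_exists {P : Set V} {v u : V} (hne : (srcs S P v).Nonempty) :
    ∃ σ ∈ srcs S P v, (res S.G P).dist u σ = sdist S P v u := by
  have : {m | ∃ σ ∈ srcs S P v, (res S.G P).dist u σ = m}.Nonempty := by
    obtain ⟨σ, hσ⟩ := hne
    exact ⟨_, σ, hσ, rfl⟩
  exact Nat.sInf_mem this

lemma sdist_le {P : Set V} {v u σ : V} (hσ : σ ∈ srcs S P v) :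
    sdist S P v u ≤ (res S.G P).dist u σ :=
  Nat.sInf_le ⟨σ, hσ, rfl⟩

lemma sdist_singleton {P : Set V} {v u : V} (hvP : v ∈ P) :
    sdist S P v u = (res S.G P).dist u v := by
  apply le_antisymm
  · exact sdist_le S (by rw [srcs_of_mem S hvP]; rfl)
  · obtain ⟨σ, hσ, hd⟩ := sdist_exists S (v := v) (u := u) ⟨v, by rw [srcs_of_mem S hvP]; rfl⟩
    rw [srcs_of_mem S hvP] at hσ
    rw [Set.mem_singleton_iff] at hσ
    subst hσ
    omega

lemma exists_nxt {P : Set V} {v u : V} (hP : nice S P) (hu : u ∈ P)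
    (hne : (srcs S P v).Nonempty) (hpos : 0 < sdist S P v u) :
    ∃ u', (res S.G P).Adj u u' ∧ sdist S P v u' + 1 = sdist S P v u := by
  obtain ⟨σ, hσ, hd⟩ := sdist_exists S (v := v) (u := u) hne
  have hreach : (res S.G P).Reachable u σ := hP.2 u hu σ (srcs_subset S hP hσ)
  obtain ⟨w, hw⟩ := hreach.exists_walk_length_eq_dist
  cases w with
  | nil => rw [Walk.length_nil] at hw; omega
  | cons ha w' =>
    rename_i m
    rw [Walk.length_cons] at hw
    have hd1 : (res S.G P).dist m σ ≤ w'.length := SimpleGraph.dist_le w'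
    have hub : sdist S P v m ≤ sdist S P v u - 1 := by
      have := sdist_le S (u := m) hσ
      omega
    have hlb : sdist S P v u ≤ sdist S P v m + 1 := by
      obtain ⟨σ', hσ', hd'⟩ := sdist_exists S (v := v) (u := m) hne
      have h1 : (res S.G P).dist u σ' ≤ (res S.G P).dist u m + (res S.G P).dist m σ' := by
        apply dist_triangle''
        · exact ⟨Walk.cons ha Walk.nil⟩
        · exact hP.2 m (res_adj_right ha) σ' (srcs_subset S hP hσ')
      have h2 : (res S.G P).dist u m ≤ 1 := by
        have := SimpleGraph.dist_le (Walk.cons ha (Walk.nil : (res S.G P).Walk m m))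
        simpa using this
      have := sdist_le S (u := u) hσ'
      omega
    exact ⟨m, ha, by omega⟩

def nxtCond (P : Set V) (v u : V) : Prop :=
  nice S P ∧ u ∈ P ∧ (srcs S P v).Nonempty ∧ 0 < sdist S P v u

noncomputable def nxt (P : Set V) (v u : V) : V :=
  open Classical in
  if h : nxtCond S P v u then (exists_nxt S h.1 h.2.1 h.2.2.1 h.2.2.2).choose else u

lemma nxt_spec {P : Set V} {v u : V} (h : nxtCond S P v u) :
    (res S.G P).Adj u (nxt S P v u) ∧ sdist S P v (nxt S P v u) + 1 = sdist S P v u := by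
  rw [nxt, dif_pos h]
  exact (exists_nxt S h.1 h.2.1 h.2.2.1 h.2.2.2).choose_spec

def levelE (P : Set V) (v : V) : Set (Sym2 V) :=
  {e | ∃ u, nxtCond S P v u ∧ e = s(u, nxt S P v u)}

def spanEdges : Set (Sym2 V) :=
  ⋃ P ∈ {P : Set V | ∃ d, Part S d P}, ⋃ v ∈ (ctrs S P : Set V), levelE S P v

noncomputable def HH : SimpleGraph V := fromEdgeSet (spanEdges S)

lemma H_le : HH S ≤ S.G := by
  intro a b hadj
  rw [HH, fromEdgeSet_adj] at hadj
  obtain ⟨he, hne⟩ := hadj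
  simp only [spanEdges, Set.mem_iUnion, Set.mem_setOf_eq] at he
  obtain ⟨P, ⟨d, hP⟩, v, hv, u, hcond, heq⟩ := he
  have hadj' := (nxt_spec S hcond).1
  rw [Sym2.eq_iff] at heq
  rcases heq with ⟨rfl, rfl⟩ | ⟨rfl, rfl⟩
  · exact hadj'.1
  · exact hadj'.1.symm

lemma H_adj_of_cond {d : ℕ} {P : Set V} {v u : V} (hP : Part S d P) (hv : v ∈ ctrs S P)
    (hcond : nxtCond S P v u) : (HH S).Adj u (nxt S P v u) := by
  rw [HH, fromEdgeSet_adj]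
  refine ⟨?_, (nxt_spec S hcond).1.1.ne⟩
  simp only [spanEdges, Set.mem_iUnion, Set.mem_setOf_eq]
  exact ⟨P, ⟨d, hP⟩, v, hv, u, hcond, rfl⟩

lemma forest_walk {d : ℕ} {P : Set V} {v : V} (hP : Part S d P) (hv : v ∈ ctrs S P) :
    ∀ (n : ℕ) (u : V), u ∈ P → (srcs S P v).Nonempty → sdist S P v u ≤ n →
      ∃ σ ∈ srcs S P v, ∃ w : (HH S).Walk u σ, w.length ≤ sdist S P v u := by
  have hnice : nice S P := part_nice S hP
  intro n
  induction n with
  | zero =>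
    intro u hu hne hd
    obtain ⟨σ, hσ, hdist⟩ := sdist_exists S (v := v) (u := u) hne
    have h0 : (res S.G P).dist u σ = 0 := by omega
    have : u = σ := by
      have hr : (res S.G P).Reachable u σ := hnice.2 u hu σ (srcs_subset S hnice hσ)
      exact (SimpleGraph.Reachable.dist_eq_zero_iff hr).mp h0
    subst this
    exact ⟨u, hσ, Walk.nil, by simp⟩
  | succ n ih =>
    intro u hu hne hd
    by_cases h0 : sdist S P v u = 0
    · obtain ⟨σ, hσ, hdist⟩ := sdist_exists S (v := v) (u := u) hne
      have hd0 : (res S.G P).dist u σ = 0 := by omega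
      have : u = σ := by
        have hr : (res S.G P).Reachable u σ := hnice.2 u hu σ (srcs_subset S hnice hσ)
        exact (SimpleGraph.Reachable.dist_eq_zero_iff hr).mp hd0
      subst this
      exact ⟨u, hσ, Walk.nil, by simp⟩
    · have hcond : nxtCond S P v u := ⟨hnice, hu, hne, by omega⟩
      obtain ⟨hadj, hsd⟩ := nxt_spec S hcond
      obtain ⟨σ, hσ, w', hw'⟩ := ih (nxt S P v u) (res_adj_right hadj) hne (by omega)
      exact ⟨σ, hσ, Walk.cons (H_adj_of_cond S hP hv hcond) w', by
        rw [Walk.length_cons]; omega⟩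

lemma H_dist_center {d : ℕ} {P : Set V} {v u : V} (hP : Part S d P) (hv : v ∈ ctrs S P)
    (hvP : v ∈ P) (hu : u ∈ P) : (HH S).dist u v ≤ (res S.G P).dist u v := by
  have hne : (srcs S P v).Nonempty := ⟨v, by rw [srcs_of_mem S hvP]; rfl⟩
  obtain ⟨σ, hσ, w, hw⟩ := forest_walk S hP hv (sdist S P v u) u hu hne le_rfl
  rw [srcs_of_mem S hvP, Set.mem_singleton_iff] at hσ
  subst hσ
  calc (HH S).dist u σ ≤ w.length := SimpleGraph.dist_le w
    _ ≤ sdist S P σ u := hw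
    _ = (res S.G P).dist u σ := sdist_singleton S hvP

lemma H_conn : (HH S).Connected := by
  have hnice : nice S Set.univ := part_nice S Part.top
  have hg := bag_spec S hnice
  obtain ⟨y₀, hy₀⟩ := hg.2.1
  have := hg.2.2.2.1 hy₀
  simp only [Set.mem_iUnion] at this
  obtain ⟨v, hv, _⟩ := this
  have : Nonempty V := S.hG.nonempty
  rw [connected_iff]
  refine ⟨fun a b => ?_, this⟩
  have hreach : ∀ u : V, (HH S).Reachable u v := by
    intro u
    obtain ⟨σ, hσ, w, _⟩ := forest_walk S Part.top hv (sdist S Set.univ v u) u (Set.mem_univ u)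
      ⟨v, by rw [srcs_of_mem S (Set.mem_univ v)]; rfl⟩ le_rfl
    rw [srcs_of_mem S (Set.mem_univ v), Set.mem_singleton_iff] at hσ
    subst hσ
    exact ⟨w⟩
  exact (hreach a).trans (hreach b).symm

end Spanner


section Prim

variable {V : Type} [Fintype V] (S : Ctx V)

lemma findmin {j : ℕ} {R : Set V} (hR : Part S j R) {s t : V} (hs : s ∈ R)
    (g : S.G.Walk s t) (hlow : ∃ y ∈ g.support, lvl S y < j) :
    ∃ j' < j, ∃ R', Part S j' R' ∧ R ⊆ R' ∧ (∀ y ∈ g.support, y ∈ R') ∧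
      ∃ z₀, ∃ hz₀ : z₀ ∈ g.support, z₀ ∈ bagY S R' := by
  classical
  have hne : g.support.toFinset.Nonempty := ⟨s, by simp⟩
  obtain ⟨z₀, hz₀f, hmin⟩ := Finset.exists_min_image g.support.toFinset (lvl S) hne
  rw [List.mem_toFinset] at hz₀f
  have hminsup : ∀ y ∈ g.support, lvl S z₀ ≤ lvl S y := by
    intro y hy
    exact hmin y (by rw [List.mem_toFinset]; exact hy)
  obtain ⟨y, hy, hylt⟩ := hlow
  have hj' : lvl S z₀ < j := lt_of_le_of_lt (hminsup y hy) hylt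
  obtain ⟨R', hR', hRR'⟩ := part_anc S hR (lvl S z₀) (le_of_lt hj')
  have hsupR' : ∀ y ∈ g.support, y ∈ R' := ksl S hR' g (hRR' hs) hminsup
  have hz₀R' : z₀ ∈ R' := hsupR' z₀ hz₀f
  have hPeq : lvlPart S z₀ = R' :=
    part_unique S (lvl_spec S z₀).1 hR' (lvl_spec S z₀).2.1 hz₀R'
  exact ⟨lvl S z₀, hj', R', hR', hRR', hsupR', z₀, hz₀f, hPeq ▸ (lvl_spec S z₀).2.2⟩

lemma res_dist_le_of_support {R : Set V} {u w : V} (g : S.G.Walk u w)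
    (hsup : ∀ y ∈ g.support, y ∈ R) : (res S.G R).dist u w ≤ g.length := by
  obtain ⟨g', hg'⟩ := exists_res_walk g hsup
  calc (res S.G R).dist u w ≤ g'.length := SimpleGraph.dist_le g'
    _ = g.length := hg'

lemma prim : ∀ j : ℕ, ∀ R : Set V, Part S j R → ∀ a b z : V, a ∈ R → b ∈ R → z ∈ bagY S R →
    (HH S).dist a b ≤
      (res S.G R).dist a z + (res S.G R).dist z b + 2 * S.ρ * (j + 1) := by
  classical
  intro j
  induction j using Nat.strong_induction_on with
  | _ j ihj =>
  intro R hR a b z ha hb hz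
  have hnice := part_nice S hR
  have hcov := (bag_spec S hnice).2.2.2.1 hz
  simp only [Set.mem_iUnion] at hcov
  obtain ⟨v, hv, hzdisk⟩ := hcov
  have hzv : S.G.dist z v ≤ S.ρ := hzdisk
  have hzR : z ∈ R := (bag_spec S hnice).1 hz
  have hbase : 2 * S.ρ ≤ 2 * S.ρ * (j + 1) := Nat.le_mul_of_pos_right _ (by omega)
  have hkey : ∀ j' : ℕ, j' < j → 2 * S.ρ * (j' + 1) + 2 * S.ρ ≤ 2 * S.ρ * (j + 1) := by
    intro j' hj'
    have he : 2 * S.ρ * (j' + 1) + 2 * S.ρ = 2 * S.ρ * (j' + 2) := by ring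
    rw [he]
    exact Nat.mul_le_mul_left _ (by omega)
  by_cases hvR : v ∈ R
  · -- center inside the part
    obtain ⟨g, hg⟩ := (S.hG z v).exists_walk_length_eq_dist
    by_cases hginR : ∀ y ∈ g.support, j ≤ lvl S y
    · have hsupR : ∀ y ∈ g.support, y ∈ R := ksl S hR g hzR hginR
      have hzvR : (res S.G R).dist z v ≤ S.ρ := by
        have := res_dist_le_of_support S g hsupR
        omega
      have h1 : (HH S).dist a v ≤ (res S.G R).dist a v := H_dist_center S hR hv hvR ha
      have h2 : (HH S).dist b v ≤ (res S.G R).dist b v := H_dist_center S hR hv hvR hb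
      have t1 : (res S.G R).dist a v ≤ (res S.G R).dist a z + (res S.G R).dist z v :=
        dist_triangle'' (hnice.2 a ha z hzR) (hnice.2 z hzR v hvR)
      have t2 : (res S.G R).dist b v ≤ (res S.G R).dist b z + (res S.G R).dist z v :=
        dist_triangle'' (hnice.2 b hb z hzR) (hnice.2 z hzR v hvR)
      have tH : (HH S).dist a b ≤ (HH S).dist a v + (HH S).dist v b :=
        (H_conn S).dist_triangle
      have c1 : (HH S).dist v b = (HH S).dist b v := SimpleGraph.dist_comm
      have c2 : (res S.G R).dist b z = (res S.G R).dist z b := SimpleGraph.dist_comm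
      linarith
    · push_neg at hginR
      obtain ⟨y, hy, hylt⟩ := hginR
      obtain ⟨j', hj', R', hR', hRR', hsupR', z₀, hz₀g, hz₀bag⟩ :=
        findmin S hR hzR g ⟨y, hy, hylt⟩
      have hnice' := part_nice S hR'
      have hIH := ihj j' hj' R' hR' a b z₀ (hRR' ha) (hRR' hb) hz₀bag
      have hlen1 : (res S.G R').dist z z₀ ≤ S.ρ := by
        have hsub : ∀ y' ∈ (g.takeUntil z₀ hz₀g).support, y' ∈ R' :=
          fun y' hy' => hsupR' y' (g.support_takeUntil_subset hz₀g hy')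
        have h1 := res_dist_le_of_support S (g.takeUntil z₀ hz₀g) hsub
        have h2 := g.length_takeUntil_le hz₀g
        omega
      have hmono : ∀ p q : V, p ∈ R → q ∈ R →
          (res S.G R').dist p q ≤ (res S.G R).dist p q := by
        intro p q hp hq
        exact Reachable.dist_anti (res_mono S.G hRR') (hnice.2 p hp q hq)
      have t1 : (res S.G R').dist a z₀ ≤ (res S.G R).dist a z + S.ρ := by
        have h3 : (res S.G R').dist a z₀ ≤ (res S.G R').dist a z + (res S.G R').dist z z₀ :=
          dist_triangle'' (hnice'.2 a (hRR' ha) z (hRR' hzR))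
            (hnice'.2 z (hRR' hzR) z₀ (hsupR' z₀ hz₀g))
        have h4 := hmono a z ha hzR
        omega
      have t2 : (res S.G R').dist z₀ b ≤ S.ρ + (res S.G R).dist z b := by
        have h3 : (res S.G R').dist z₀ b ≤ (res S.G R').dist z₀ z + (res S.G R').dist z b :=
          dist_triangle'' (hnice'.2 z₀ (hsupR' z₀ hz₀g) z (hRR' hzR))
            (hnice'.2 z (hRR' hzR) b (hRR' hb))
        have h4 := hmono z b hzR hb
        have c : (res S.G R').dist z₀ z = (res S.G R').dist z z₀ := SimpleGraph.dist_comm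
        omega
      have := hkey j' hj'
      linarith
  · -- center outside the part
    have hzsrc : z ∈ srcs S R v := by
      rw [srcs_of_not_mem S hvR]
      exact ⟨hz, hzdisk⟩
    have hneS : (srcs S R v).Nonempty := ⟨z, hzsrc⟩
    obtain ⟨σa, hσa, wa, hwa⟩ := forest_walk S hR hv (sdist S R v a) a ha hneS le_rfl
    obtain ⟨σb, hσb, wb, hwb⟩ := forest_walk S hR hv (sdist S R v b) b hb hneS le_rfl
    have hda : (HH S).dist a σa ≤ (res S.G R).dist a z := by
      have h1 := sdist_le S (u := a) hzsrc
      have h2 := SimpleGraph.dist_le wa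
      omega
    have hdb : (HH S).dist b σb ≤ (res S.G R).dist b z := by
      have h1 := sdist_le S (u := b) hzsrc
      have h2 := SimpleGraph.dist_le wb
      omega
    rw [srcs_of_not_mem S hvR] at hσa hσb
    have hσaR : σa ∈ R := (bag_spec S hnice).1 hσa.1
    have hσbR : σb ∈ R := (bag_spec S hnice).1 hσb.1
    obtain ⟨ga, hga⟩ := (S.hG σa v).exists_walk_length_eq_dist
    obtain ⟨gb, hgb⟩ := (S.hG σb v).exists_walk_length_eq_dist
    have hgalen : ga.length ≤ S.ρ := by rw [hga]; exact hσa.2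
    have hgblen : gb.length ≤ S.ρ := by rw [hgb]; exact hσb.2
    have hg'len : (ga.append gb.reverse).length ≤ 2 * S.ρ := by
      rw [Walk.length_append, Walk.length_reverse]
      omega
    have hlow : ∃ y ∈ (ga.append gb.reverse).support, lvl S y < j := by
      by_contra hcon
      push_neg at hcon
      have hsupR : ∀ y ∈ (ga.append gb.reverse).support, y ∈ R :=
        ksl S hR (ga.append gb.reverse) hσaR (fun y hy => hcon y hy)
      have hvmem : v ∈ (ga.append gb.reverse).support := by
        rw [Walk.mem_support_append_iff]
        left
        exact ga.end_mem_support
      exact hvR (hsupR v hvmem)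
    obtain ⟨j', hj', R', hR', hRR', hsupR', z₀, hz₀g, hz₀bag⟩ :=
      findmin S hR hσaR (ga.append gb.reverse) hlow
    have hIH := ihj j' hj' R' hR' σa σb z₀ (hRR' hσaR) (hRR' hσbR) hz₀bag
    have hsubT : ∀ y ∈ ((ga.append gb.reverse).takeUntil z₀ hz₀g).support, y ∈ R' :=
      fun y hy => hsupR' y ((ga.append gb.reverse).support_takeUntil_subset hz₀g hy)
    have hsubD : ∀ y ∈ ((ga.append gb.reverse).dropUntil z₀ hz₀g).support, y ∈ R' :=
      fun y hy => hsupR' y ((ga.append gb.reverse).support_dropUntil_subset hz₀g hy)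
    have e1 := res_dist_le_of_support S ((ga.append gb.reverse).takeUntil z₀ hz₀g) hsubT
    have e2 := res_dist_le_of_support S ((ga.append gb.reverse).dropUntil z₀ hz₀g) hsubD
    have hsplit : ((ga.append gb.reverse).takeUntil z₀ hz₀g).length +
        ((ga.append gb.reverse).dropUntil z₀ hz₀g).length = (ga.append gb.reverse).length := by
      have hspec := (ga.append gb.reverse).take_spec hz₀g
      calc ((ga.append gb.reverse).takeUntil z₀ hz₀g).length +
          ((ga.append gb.reverse).dropUntil z₀ hz₀g).length
          = (((ga.append gb.reverse).takeUntil z₀ hz₀g).append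
              ((ga.append gb.reverse).dropUntil z₀ hz₀g)).length := (Walk.length_append _ _).symm
        _ = (ga.append gb.reverse).length := by rw [hspec]
    have hσσ : (HH S).dist σa σb ≤ 2 * S.ρ * (j + 1) := by
      have := hkey j' hj'
      linarith
    have tH1 : (HH S).dist a b ≤ (HH S).dist a σa + (HH S).dist σa b :=
      (H_conn S).dist_triangle
    have tH2 : (HH S).dist σa b ≤ (HH S).dist σa σb + (HH S).dist σb b :=
      (H_conn S).dist_triangle
    have c1 : (HH S).dist σb b = (HH S).dist b σb := SimpleGraph.dist_comm
    have c2 : (res S.G R).dist b z = (res S.G R).dist z b := SimpleGraph.dist_comm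
    linarith

end Prim


section Hand

variable {V : Type} [Fintype V] (S : Ctx V)

lemma res_walk_support {G : SimpleGraph V} {Q : Set V} {x y : V} (hx : x ∈ Q)
    (w : (res G Q).Walk x y) : ∀ z ∈ w.support, z ∈ Q := by
  induction w with
  | nil =>
    intro z hz
    rw [Walk.support_nil, List.mem_singleton] at hz
    subst hz
    exact hx
  | cons ha p ih =>
    intro z hz
    rw [Walk.support_cons, List.mem_cons] at hz
    rcases hz with rfl | hz
    · exact hx
    · exact ih (res_adj_right ha) z hz

lemma hand : ∀ n d : ℕ, ∀ (Q : Set V) (x y : V), Part S d Q → x ∈ Q → y ∈ Q → x ≠ y →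
    Q.ncard ≤ n → (res S.G Q).dist x y = S.G.dist x y →
    ∃ d' Q' z, Part S d' Q' ∧ x ∈ Q' ∧ y ∈ Q' ∧ z ∈ bagY S Q' ∧
      (res S.G Q').dist x z + (res S.G Q').dist z y ≤ S.G.dist x y := by
  classical
  intro n
  induction n using Nat.strong_induction_on with
  | _ n ihn =>
  intro d Q x y hQ hx hy hne hn hpres
  have hnice := part_nice S hQ
  obtain ⟨w, hw⟩ := (hnice.2 x hx y hy).exists_walk_length_eq_dist
  by_cases hmeet : ∃ z ∈ w.support, z ∈ bagY S Q
  · obtain ⟨z, hzm, hzbag⟩ := hmeet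
    refine ⟨d, Q, z, hQ, hx, hy, hzbag, ?_⟩
    have e1 : (res S.G Q).dist x z ≤ (w.takeUntil z hzm).length :=
      SimpleGraph.dist_le _
    have e2 : (res S.G Q).dist z y ≤ (w.dropUntil z hzm).length :=
      SimpleGraph.dist_le _
    have hsplit : (w.takeUntil z hzm).length + (w.dropUntil z hzm).length = w.length := by
      have hspec := w.take_spec hzm
      calc (w.takeUntil z hzm).length + (w.dropUntil z hzm).length
          = ((w.takeUntil z hzm).append (w.dropUntil z hzm)).length :=
            (Walk.length_append _ _).symm
        _ = w.length := by rw [hspec]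
    omega
  · push_neg at hmeet
    have hsupQ : ∀ z ∈ w.support, z ∈ Q := res_walk_support hx w
    have hsup : ∀ z ∈ w.support, z ∈ Q \ bagY S Q := fun z hz => ⟨hsupQ z hz, hmeet z hz⟩
    have hx' : x ∈ Q \ bagY S Q := hsup x w.start_mem_support
    obtain ⟨w'', hw''⟩ := exists_res_walk' w hsup
    have hyC : y ∈ compOf S.G (Q \ bagY S Q) x := ⟨w''⟩
    have hchild : Part S (d + 1) (compOf S.G (Q \ bagY S Q) x) := Part.child hQ hx'
    have hlt : (compOf S.G (Q \ bagY S Q) x).ncard < Q.ncard := by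
      apply Set.ncard_lt_ncard _ (Set.toFinite _)
      refine ⟨fun t ht => (compOf_subset hx' ht).1, fun hsupset => ?_⟩
      obtain ⟨y0, hy0⟩ := (bag_spec S hnice).2.1
      have : y0 ∈ compOf S.G (Q \ bagY S Q) x := hsupset ((bag_spec S hnice).1 hy0)
      exact (compOf_subset hx' this).2 hy0
    have hpres' : (res S.G (compOf S.G (Q \ bagY S Q) x)).dist x y = S.G.dist x y := by
      apply le_antisymm
      · obtain ⟨w3, hw3⟩ := exists_comp_walk (mem_compOf_self S.G (Q \ bagY S Q) x) w''
        calc (res S.G (compOf S.G (Q \ bagY S Q) x)).dist x y ≤ w3.length :=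
              SimpleGraph.dist_le w3
          _ = w.length := by rw [hw3, hw'']
          _ = S.G.dist x y := by rw [hw, hpres]
      · have hreach : (res S.G (compOf S.G (Q \ bagY S Q) x)).Reachable x y :=
          (compOf_nice hx').2 x (mem_compOf_self _ _ _) y hyC
        exact Reachable.dist_anti (res_le _ _) hreach
    exact ihn (compOf S.G (Q \ bagY S Q) x).ncard (by omega) (d + 1) _ x y hchild
      (mem_compOf_self _ _ _) hyC hne le_rfl hpres'

lemma H_dist_bound (x y : V) (hne : x ≠ y) :
    ∃ d : ℕ, 2 ^ (d + 1) ≤ Fintype.card V ∧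
      (HH S).dist x y ≤ S.G.dist x y + 2 * S.ρ * (d + 1) := by
  have hpres0 : (res S.G Set.univ).dist x y = S.G.dist x y := by rw [res_univ]
  obtain ⟨d', Q', z, hQ', hx', hy', hzbag, hsum⟩ :=
    hand S (Set.univ : Set V).ncard 0 Set.univ x y Part.top (Set.mem_univ x) (Set.mem_univ y)
      hne le_rfl hpres0
  refine ⟨d', ?_, ?_⟩
  · have hcard2 : 2 ≤ Q'.ncard := by
      have : 1 < Q'.ncard := Set.one_lt_ncard_iff (Set.toFinite _) |>.mpr ⟨x, y, hx', hy', hne⟩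
      omega
    have := part_card S hQ'
    calc 2 ^ (d' + 1) = 2 ^ d' * 2 := by ring
      _ ≤ 2 ^ d' * Q'.ncard := Nat.mul_le_mul_left _ hcard2
      _ ≤ Fintype.card V := this
  · have := prim S d' Q' hQ' x y z hx' hy' hzbag
    omega

end Hand


section Count

variable {V : Type} [Fintype V] (S : Ctx V)

lemma ncard_biUnion_le {α β : Type} [Finite β] (t : Finset α) (f : α → Set β) :
    (⋃ a ∈ t, f a).ncard ≤ ∑ a ∈ t, (f a).ncard := by
  classical
  induction t using Finset.induction with
  | empty => simp
  | insert _ _ hnot ih =>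
    rename_i a t
    rw [Finset.sum_insert hnot, Finset.set_biUnion_insert]
    calc (f a ∪ ⋃ b ∈ t, f b).ncard ≤ (f a).ncard + (⋃ b ∈ t, f b).ncard :=
          Set.ncard_union_le _ _
      _ ≤ (f a).ncard + ∑ b ∈ t, (f b).ncard := by omega

lemma sum_ncard_le_ncard_biUnion {α : Type} [Finite α] (t : Finset (Set α))
    (hdisj : ∀ P ∈ t, ∀ Q ∈ t, P ≠ Q → Disjoint P Q) :
    ∑ P ∈ t, P.ncard ≤ (⋃ P ∈ t, P).ncard := by
  classical
  induction t using Finset.induction with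
  | empty => simp
  | insert _ _ hnot ih =>
    rename_i P t
    rw [Finset.sum_insert hnot, Finset.set_biUnion_insert]
    have hd : Disjoint P (⋃ Q ∈ t, Q) := by
      rw [Set.disjoint_left]
      intro x hxP hxU
      simp only [Set.mem_iUnion] at hxU
      obtain ⟨Q, hQ, hxQ⟩ := hxU
      have hne : P ≠ Q := fun h => hnot (h ▸ hQ)
      exact (Set.disjoint_left.mp
        (hdisj P (Finset.mem_insert_self _ _) Q (Finset.mem_insert_of_mem hQ) hne)) hxP hxQ
    rw [Set.ncard_union_eq hd]
    have := ih (fun P' hP' Q hQ hne =>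
      hdisj P' (Finset.mem_insert_of_mem hP') Q (Finset.mem_insert_of_mem hQ) hne)
    omega

lemma levelE_count {P : Set V} {v : V} : (levelE S P v).ncard ≤ P.ncard - 1 := by
  classical
  rcases Set.eq_empty_or_nonempty (levelE S P v) with he | hne
  · rw [he]
    simp
  · obtain ⟨e₀, u₀, hcond₀, _⟩ := hne
    obtain ⟨σ₀, hσ₀⟩ := hcond₀.2.2.1
    have hσ₀P : σ₀ ∈ P := srcs_subset S hcond₀.1 hσ₀
    have hsdist0 : sdist S P v σ₀ = 0 := by
      have h1 := sdist_le S (u := σ₀) hσ₀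
      have h2 : (res S.G P).dist σ₀ σ₀ = 0 := SimpleGraph.dist_self
      omega
    have himg : levelE S P v ⊆ (fun u => s(u, nxt S P v u)) '' (P \ {σ₀}) := by
      rintro e ⟨u, hcond, rfl⟩
      refine ⟨u, ⟨hcond.2.1, ?_⟩, rfl⟩
      intro hu
      rw [Set.mem_singleton_iff] at hu
      subst hu
      have := hcond.2.2.2
      omega
    calc (levelE S P v).ncard ≤ ((fun u => s(u, nxt S P v u)) '' (P \ {σ₀})).ncard :=
          Set.ncard_le_ncard himg (Set.toFinite _)
      _ ≤ (P \ {σ₀}).ncard := Set.ncard_image_le (Set.toFinite _)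
      _ = P.ncard - 1 := Set.ncard_diff_singleton_of_mem hσ₀P

lemma part_level_count {d : ℕ} {P : Set V} (hP : Part S d P) :
    (⋃ v ∈ (ctrs S P : Set V), levelE S P v).ncard ≤ S.k * (P.ncard - 1) := by
  classical
  have h1 : (⋃ v ∈ (ctrs S P : Set V), levelE S P v) = ⋃ v ∈ ctrs S P, levelE S P v := by
    simp
  rw [h1]
  calc (⋃ v ∈ ctrs S P, levelE S P v).ncard ≤ ∑ v ∈ ctrs S P, (levelE S P v).ncard :=
        ncard_biUnion_le _ _
    _ ≤ ∑ _v ∈ ctrs S P, (P.ncard - 1) := Finset.sum_le_sum (fun v _ => levelE_count S)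
    _ = (ctrs S P).card * (P.ncard - 1) := by rw [Finset.sum_const, smul_eq_mul]
    _ ≤ S.k * (P.ncard - 1) :=
        Nat.mul_le_mul_right _ (bag_spec S (part_nice S hP)).2.2.1

lemma depth_count (d : ℕ) :
    (⋃ P ∈ (Set.toFinite {P : Set V | Part S d P}).toFinset,
      ⋃ v ∈ (ctrs S P : Set V), levelE S P v).ncard ≤ S.k * (Fintype.card V - 1) := by
  classical
  set t := (Set.toFinite {P : Set V | Part S d P}).toFinset with ht
  have hmem : ∀ P ∈ t, Part S d P := by
    intro P hP
    rw [ht, Set.Finite.mem_toFinset] at hP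
    exact hP
  have hdisj : ∀ P ∈ t, ∀ Q ∈ t, P ≠ Q → Disjoint P Q := by
    intro P hP Q hQ hne
    rw [Set.disjoint_left]
    intro x hxP hxQ
    exact (part_disj S (hmem P hP) (hmem Q hQ) hne x hxP x hxQ).1 rfl
  have hsumcard : ∑ P ∈ t, P.ncard ≤ Fintype.card V := by
    calc ∑ P ∈ t, P.ncard ≤ (⋃ P ∈ t, P).ncard := sum_ncard_le_ncard_biUnion t hdisj
      _ ≤ (Set.univ : Set V).ncard := Set.ncard_le_ncard (Set.subset_univ _) (Set.toFinite _)
      _ = Fintype.card V := by rw [Set.ncard_univ, Nat.card_eq_fintype_card]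
  have hsum1 : ∑ P ∈ t, (P.ncard - 1) ≤ Fintype.card V - 1 := by
    have hpos : ∀ P ∈ t, 1 ≤ P.ncard := by
      intro P hP
      exact (Set.ncard_pos (Set.toFinite _)).mpr (part_nice S (hmem P hP)).1
    have hid : ∑ P ∈ t, (P.ncard - 1) + t.card = ∑ P ∈ t, P.ncard := by
      rw [Finset.card_eq_sum_ones, ← Finset.sum_add_distrib]
      apply Finset.sum_congr rfl
      intro P hP
      have := hpos P hP
      omega
    rcases Finset.eq_empty_or_nonempty t with hemp | htne
    · rw [hemp]
      simp
    · have : 1 ≤ t.card := Finset.card_pos.mpr htne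
      omega
  calc (⋃ P ∈ t, ⋃ v ∈ (ctrs S P : Set V), levelE S P v).ncard
      ≤ ∑ P ∈ t, (⋃ v ∈ (ctrs S P : Set V), levelE S P v).ncard := ncard_biUnion_le _ _
    _ ≤ ∑ P ∈ t, S.k * (P.ncard - 1) :=
        Finset.sum_le_sum (fun P hP => part_level_count S (hmem P hP))
    _ = S.k * ∑ P ∈ t, (P.ncard - 1) := by rw [Finset.mul_sum]
    _ ≤ S.k * (Fintype.card V - 1) := Nat.mul_le_mul_left _ hsum1

lemma edge_count :
    Nat.card (HH S).edgeSet ≤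
      S.k * (Fintype.card V - 1) * Nat.log 2 (Fintype.card V) := by
  classical
  have : Nonempty V := S.hG.nonempty
  have hn0 : Fintype.card V ≠ 0 := Nat.pos_iff_ne_zero.mp Fintype.card_pos
  have hsub : (HH S).edgeSet ⊆
      ⋃ d ∈ Finset.range (Nat.log 2 (Fintype.card V)),
        ⋃ P ∈ (Set.toFinite {P : Set V | Part S d P}).toFinset,
          ⋃ v ∈ (ctrs S P : Set V), levelE S P v := by
    intro e he
    rw [HH, edgeSet_fromEdgeSet] at he
    obtain ⟨hesp, hnd⟩ := he
    simp only [spanEdges, Set.mem_iUnion, Set.mem_setOf_eq] at hesp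
    obtain ⟨P, ⟨d, hPd⟩, v, hv, hle⟩ := hesp
    obtain ⟨u, hcond, heq⟩ := hle
    have hucard : 1 < P.ncard := by
      have h1 : u ∈ P := hcond.2.1
      have h2 : nxt S P v u ∈ P := res_adj_right (nxt_spec S hcond).1
      have h3 : u ≠ nxt S P v u := (nxt_spec S hcond).1.1.ne
      exact (Set.one_lt_ncard_iff (Set.toFinite _)).mpr ⟨u, nxt S P v u, h1, h2, h3⟩
    have hdlt : d < Nat.log 2 (Fintype.card V) := by
      have hp := part_card S hPd
      have h2 : 2 ^ (d + 1) ≤ Fintype.card V := by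
        calc 2 ^ (d + 1) = 2 ^ d * 2 := by ring
          _ ≤ 2 ^ d * P.ncard := Nat.mul_le_mul_left _ (by omega)
          _ ≤ Fintype.card V := hp
      have := (Nat.le_log_iff_pow_le (by norm_num) hn0).mpr h2
      omega
    simp only [Set.mem_iUnion]
    refine ⟨d, Finset.mem_range.mpr hdlt, P, ?_, v, hv, u, hcond, heq⟩
    rw [Set.Finite.mem_toFinset]
    exact hPd
  calc Nat.card (HH S).edgeSet = (HH S).edgeSet.ncard := Nat.card_coe_set_eq _
    _ ≤ (⋃ d ∈ Finset.range (Nat.log 2 (Fintype.card V)),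
          ⋃ P ∈ (Set.toFinite {P : Set V | Part S d P}).toFinset,
            ⋃ v ∈ (ctrs S P : Set V), levelE S P v).ncard :=
        Set.ncard_le_ncard hsub (Set.toFinite _)
    _ ≤ ∑ d ∈ Finset.range (Nat.log 2 (Fintype.card V)),
          (⋃ P ∈ (Set.toFinite {P : Set V | Part S d P}).toFinset,
            ⋃ v ∈ (ctrs S P : Set V), levelE S P v).ncard := ncard_biUnion_le _ _
    _ ≤ ∑ _d ∈ Finset.range (Nat.log 2 (Fintype.card V)), S.k * (Fintype.card V - 1) :=
        Finset.sum_le_sum (fun d _ => depth_count S d)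
    _ = S.k * (Fintype.card V - 1) * Nat.log 2 (Fintype.card V) := by
        rw [Finset.sum_const, Finset.card_range, smul_eq_mul, mul_comm]

end Count

end Stmt13

/-- Every connected graph with `n > k` vertices and `tb_k(G) ≤ ρ` admits an
additive `(2ρ·(1+log₂ n))`-spanner with at most `k·(n−1)·(1+log₂ n)` edges. -/
theorem stmt13 {V : Type} [Fintype V] (G : SimpleGraph V) (hG : G.Connected)
    (k ρ : ℕ) (hk : 1 ≤ k) (hn : k < Fintype.card V) (h : kTreeBreadth k G ≤ ρ) :
    ∃ H : SimpleGraph V, H ≤ G ∧ H.Connected ∧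
      (Nat.card H.edgeSet : ℝ) ≤
        (k : ℝ) * ((Fintype.card V : ℝ) - 1) * (1 + Real.logb 2 (Fintype.card V)) ∧
      ∀ x y : V, (H.dist x y : ℝ) ≤
        (G.dist x y : ℝ) + 2 * (ρ : ℝ) * (1 + Real.logb 2 (Fintype.card V)) := by
  classical
  have hn2 : 2 ≤ Fintype.card V := by omega
  have hne : Nonempty V := hG.nonempty
  obtain ⟨v₀⟩ := hne
  have htriv : (Fintype.card V) ∈ { r : ℕ | ∃ (I : Type) (T : SimpleGraph I) (X : I → Set V),
      IsTreeDecomp G T X ∧ ∀ i, ∃ s : Finset V, s.card ≤ k ∧ X i ⊆ ⋃ v ∈ s, disk G v r } := by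
    refine ⟨Unit, ⊥, fun _ => Set.univ, ⟨⟨?_, ?_⟩, fun v => ⟨(), Set.mem_univ v⟩,
      fun u v _ => ⟨(), Set.mem_univ u, Set.mem_univ v⟩,
      fun i j k' p hp hj z _ => Set.mem_univ z⟩, ?_⟩
    · rw [connected_iff]
      exact ⟨fun a b => by cases a; cases b; exact Reachable.refl _, ⟨()⟩⟩
    · intro v c hc
      cases c with
      | nil => exact hc.ne_nil rfl
      | cons hadj p => exact hadj.elim
    · intro i
      refine ⟨{v₀}, by simpa using hk, ?_⟩
      intro u _
      simp only [Set.mem_iUnion, Finset.mem_singleton]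
      refine ⟨v₀, rfl, ?_⟩
      obtain ⟨p, hp, hlen⟩ := Reachable.exists_path_of_dist (hG u v₀)
      have := hp.length_lt
      simp only [disk, Set.mem_setOf_eq]
      omega
  have hmem : kTreeBreadth k G ∈ { r : ℕ | ∃ (I : Type) (T : SimpleGraph I) (X : I → Set V),
      IsTreeDecomp G T X ∧ ∀ i, ∃ s : Finset V, s.card ≤ k ∧ X i ⊆ ⋃ v ∈ s, disk G v r } :=
    Nat.sInf_mem ⟨_, htriv⟩
  obtain ⟨I, T, X, htd, hcov⟩ := hmem
  have hcov' : ∀ i, ∃ s : Finset V, s.card ≤ k ∧ X i ⊆ ⋃ v ∈ s, disk G v ρ := by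
    intro i
    obtain ⟨s, hs1, hs2⟩ := hcov i
    refine ⟨s, hs1, fun z hz => ?_⟩
    have hz2 := hs2 hz
    simp only [Set.mem_iUnion] at hz2 ⊢
    obtain ⟨v, hv, hd⟩ := hz2
    refine ⟨v, hv, ?_⟩
    simp only [disk, Set.mem_setOf_eq] at hd ⊢
    exact le_trans hd h
  set S : Stmt13.Ctx V := ⟨G, k, ρ, I, T, X, hG, htd, hcov'⟩ with hS
  have hlogn : (0:ℝ) ≤ Real.logb 2 (Fintype.card V) :=
    Real.logb_nonneg (by norm_num) (by exact_mod_cast Nat.one_le_iff_ne_zero.mpr (by omega))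
  refine ⟨Stmt13.HH S, Stmt13.H_le S, Stmt13.H_conn S, ?_, ?_⟩
  · have hec := Stmt13.edge_count S
    have hlog : (Nat.log 2 (Fintype.card V) : ℝ) ≤ 1 + Real.logb 2 (Fintype.card V) := by
      have h1 : ((2:ℝ) ^ (Nat.log 2 (Fintype.card V)) : ℝ) ≤ (Fintype.card V : ℝ) := by
        exact_mod_cast Nat.pow_log_le_self 2 (by omega)
      have h2 : Real.logb 2 ((2:ℝ) ^ (Nat.log 2 (Fintype.card V)))
          ≤ Real.logb 2 (Fintype.card V) :=
        Real.logb_le_logb_of_le (by norm_num) (by positivity) h1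
      rw [Real.logb_pow, Real.logb_self_eq_one (by norm_num)] at h2
      linarith
    have hfact : (0:ℝ) ≤ (k:ℝ) * ((Fintype.card V : ℝ) - 1) := by
      have : (2:ℝ) ≤ (Fintype.card V : ℝ) := by exact_mod_cast hn2
      have hk' : (0:ℝ) ≤ (k:ℝ) := by positivity
      nlinarith
    calc (Nat.card (Stmt13.HH S).edgeSet : ℝ)
        ≤ ((S.k * (Fintype.card V - 1) * Nat.log 2 (Fintype.card V) : ℕ) : ℝ) := by
          exact_mod_cast hec
      _ = (k:ℝ) * ((Fintype.card V : ℝ) - 1) * (Nat.log 2 (Fintype.card V) : ℝ) := by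
          have h1 : ((Fintype.card V - 1 : ℕ) : ℝ) = (Fintype.card V : ℝ) - 1 := by
            have : 1 ≤ Fintype.card V := by omega
            push_cast [Nat.cast_sub this]
            ring
          push_cast
          rw [h1]
      _ ≤ (k:ℝ) * ((Fintype.card V : ℝ) - 1) * (1 + Real.logb 2 (Fintype.card V)) :=
          mul_le_mul_of_nonneg_left hlog hfact
  · intro x y
    by_cases hxy : x = y
    · subst hxy
      rw [SimpleGraph.dist_self]
      have h1 : (0:ℝ) ≤ (G.dist x x : ℝ) := by positivity
      have h2 : (0:ℝ) ≤ 2 * (ρ:ℝ) * (1 + Real.logb 2 (Fintype.card V)) := by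
        apply mul_nonneg (by positivity)
        linarith
      push_cast
      linarith
    · obtain ⟨d, hdn, hdist⟩ := Stmt13.H_dist_bound S x y hxy
      have hc1 : ((Stmt13.HH S).dist x y : ℝ) ≤ (G.dist x y : ℝ) + 2*(ρ:ℝ)*((d:ℝ)+1) := by
        have : ((Stmt13.HH S).dist x y : ℝ) ≤
            ((G.dist x y + 2 * ρ * (d+1) : ℕ) : ℝ) := by exact_mod_cast hdist
        push_cast at this
        linarith
      have hd1 : ((d:ℝ)+1) ≤ Real.logb 2 (Fintype.card V) := by
        have h1 : ((2:ℝ) ^ (d+1) : ℝ) ≤ (Fintype.card V : ℝ) := by exact_mod_cast hdn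
        have h2 : Real.logb 2 ((2:ℝ) ^ (d+1)) ≤ Real.logb 2 (Fintype.card V) :=
          Real.logb_le_logb_of_le (by norm_num) (by positivity) h1
        rw [Real.logb_pow, Real.logb_self_eq_one (by norm_num)] at h2
        push_cast at h2
        linarith
      have h3 : (0:ℝ) ≤ 2*(ρ:ℝ) := by positivity
      have h4 : 2*(ρ:ℝ)*((d:ℝ)+1) ≤ 2*(ρ:ℝ)*(1 + Real.logb 2 (Fintype.card V)) := by
        apply mul_le_mul_of_nonneg_left _ h3
        linarith
      linarith
end

section
/- Let k ≥ 1. Every finite connected unweighted graph G with n > k vertices that admits a multiplicative t-spanner of tree-width at most k−1 also admits a system of at most k·(1+log₂ n) collective additive tree (2⌈t/2⌉·(1+log₂ n))-spanners. -/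
open SimpleGraph

namespace Stmt18

variable {α : Type}

/-- `x` and `y` are joined by a walk of `G` staying inside `S`. -/
def Lkd (G : SimpleGraph α) (S : Set α) (x y : α) : Prop :=
  ∃ p : G.Walk x y, ∀ z ∈ p.support, z ∈ S

lemma Lkd.mem_left {G : SimpleGraph α} {S : Set α} {x y : α} (h : Lkd G S x y) : x ∈ S := by
  obtain ⟨p, hp⟩ := h; exact hp x p.start_mem_support

lemma Lkd.mem_right {G : SimpleGraph α} {S : Set α} {x y : α} (h : Lkd G S x y) : y ∈ S := by
  obtain ⟨p, hp⟩ := h; exact hp y p.end_mem_support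

lemma Lkd.refl {G : SimpleGraph α} {S : Set α} {x : α} (hx : x ∈ S) : Lkd G S x x :=
  ⟨Walk.nil, by simpa using hx⟩

lemma Lkd.symm {G : SimpleGraph α} {S : Set α} {x y : α} (h : Lkd G S x y) : Lkd G S y x := by
  obtain ⟨p, hp⟩ := h
  exact ⟨p.reverse, by simpa using hp⟩

lemma Lkd.trans {G : SimpleGraph α} {S : Set α} {x y z : α} (h : Lkd G S x y)
    (h' : Lkd G S y z) : Lkd G S x z := by
  obtain ⟨p, hp⟩ := h; obtain ⟨q, hq⟩ := h'
  refine ⟨p.append q, fun w hw => ?_⟩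
  rcases (Walk.mem_support_append_iff _ _).mp hw with h | h
  · exact hp w h
  · exact hq w h

lemma Lkd.mono {G : SimpleGraph α} {S S' : Set α} (hSS : S ⊆ S') {x y : α}
    (h : Lkd G S x y) : Lkd G S' x y := by
  obtain ⟨p, hp⟩ := h; exact ⟨p, fun z hz => hSS (hp z hz)⟩

lemma Lkd.of_adj {G : SimpleGraph α} {S : Set α} {x y : α} (h : G.Adj x y)
    (hx : x ∈ S) (hy : y ∈ S) : Lkd G S x y :=
  ⟨h.toWalk, by
    intro z hz
    simp only [Walk.support_cons, Walk.support_nil, List.mem_cons, List.mem_singleton,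
      List.not_mem_nil, or_false] at hz
    rcases hz with rfl | rfl
    exacts [hx, hy]⟩

/-- The `S`-component (class) of `x`. -/
def cls (G : SimpleGraph α) (S : Set α) (x : α) : Set α := {y | Lkd G S x y}

lemma cls_subset {G : SimpleGraph α} {S : Set α} {x : α} : cls G S x ⊆ S :=
  fun _ h => h.mem_right

lemma mem_cls_self {G : SimpleGraph α} {S : Set α} {x : α} (hx : x ∈ S) : x ∈ cls G S x :=
  Lkd.refl hx

lemma cls_lkd {G : SimpleGraph α} {S : Set α} {x y z : α} (hy : y ∈ cls G S x)
    (hz : z ∈ cls G S x) : Lkd G S y z := (Lkd.symm hy).trans hz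

lemma cls_eq_of_lkd {G : SimpleGraph α} {S : Set α} {x y : α} (h : Lkd G S x y) :
    cls G S x = cls G S y := by
  ext z; exact ⟨fun hz => (h.symm).trans hz, fun hz => h.trans hz⟩

lemma lkd_mem_cls {G : SimpleGraph α} {S : Set α} {x y z : α} (hy : y ∈ cls G S x)
    (h : Lkd G S y z) : z ∈ cls G S x := Lkd.trans hy h

/-- First exit of a walk out of a set. -/
lemma first_exit {G : SimpleGraph α} {R : Set α} {b e : α} (p : G.Walk b e)
    (hb : b ∈ R) (he : e ∉ R) :
    ∃ (w u : α) (q : G.Walk b w), w ∉ R ∧ u ∈ R ∧ G.Adj u w ∧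
      (∀ z ∈ q.support, z = w ∨ z ∈ R) ∧ q.length ≤ p.length := by
  induction p with
  | nil => exact absurd hb he
  | @cons x a y hadj r ih =>
    by_cases haR : a ∈ R
    · obtain ⟨w, u, q, hw, hu, hadj', hq, hlen⟩ := ih haR he
      refine ⟨w, u, Walk.cons hadj q, hw, hu, hadj', ?_, by simpa using Nat.succ_le_succ hlen⟩
      intro z hz
      rw [Walk.support_cons] at hz
      rcases List.mem_cons.mp hz with rfl | hz'
      · exact Or.inr hb
      · exact hq z hz'
    · refine ⟨a, x, hadj.toWalk, haR, hb, hadj, ?_, by simp⟩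
      intro z hz
      simp only [Walk.support_cons, Walk.support_nil, List.mem_cons, List.mem_singleton,
        List.not_mem_nil, or_false] at hz
      rcases hz with rfl | rfl
      · exact Or.inr hb
      · exact Or.inl rfl

end Stmt18


namespace Stmt18X

variable {V I : Type}


open Stmt18

/-- walk split: existence of a midpoint. -/
lemma exists_mid {G : SimpleGraph V} {u v : V} (p : G.Walk u v) (a b : ℕ)
    (h : p.length ≤ a + b) :
    ∃ z, ∃ (q₁ : G.Walk u z) (q₂ : G.Walk z v), q₁.length ≤ a ∧ q₂.length ≤ b := by
  induction a generalizing u p with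
  | zero => exact ⟨u, Walk.nil, p, le_rfl, by simpa using h⟩
  | succ a ih =>
    cases p with
    | nil => exact ⟨v, Walk.nil, Walk.nil, by simp, by simp⟩
    | cons hadj r =>
      obtain ⟨z, q₁, q₂, h₁, h₂⟩ := ih r (by simpa [Nat.succ_add] using h)
      exact ⟨z, Walk.cons hadj q₁, q₂, by simpa using Nat.succ_le_succ h₁, h₂⟩

/-- The set of nodes whose bag contains `v` is linked along tree paths. -/
lemma nodes_lkd {G : SimpleGraph V} {T : SimpleGraph I} {X : I → Set V}
    (hD : IsTreeDecomp G T X) {v : V} {i k : I} (hi : v ∈ X i) (hk : v ∈ X k) :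
    Lkd T {m | v ∈ X m} i k := by
  classical
  obtain ⟨w⟩ := hD.1.isConnected i k
  exact ⟨w.toPath.1, fun m hm => hD.2.2.2 i m k w.toPath.1 w.toPath.2 hm ⟨hi, hk⟩⟩

lemma decomp_walk_meets_aux {H : SimpleGraph V} {T : SimpleGraph I} {X : I → Set V}
    (hD : IsTreeDecomp H T X) {v : V} {k j : I} (hv : v ∈ X k) :
    ∀ {u' : V} (W' : H.Walk u' v) (i' : I), u' ∈ X i' →
      (∀ z ∈ W'.support, z ∉ X j) → Lkd T {m | m ≠ j} i' k := by
  intro u' W'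
  induction W' with
  | nil =>
    intro i' hi' hno'
    refine (nodes_lkd hD hi' hv).mono ?_
    intro m hm hmj
    exact hno' _ (Walk.start_mem_support _) (hmj ▸ hm)
  | @cons x a y hadj r ih =>
    intro i' hi' hno'
    obtain ⟨m₀, hxm₀, ham₀⟩ := hD.2.2.1 x a hadj
    have h1 : Lkd T {m | m ≠ j} i' m₀ := by
      refine (nodes_lkd hD hi' hxm₀).mono ?_
      intro m hm hmj
      exact hno' _ (Walk.start_mem_support _) (hmj ▸ hm)
    have h2 : Lkd T {m | m ≠ j} m₀ k := by
      refine ih hv m₀ ham₀ ?_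
      intro z hz
      exact hno' z (by rw [Walk.support_cons]; exact List.mem_cons_of_mem _ hz)
    exact h1.trans h2

/-- Separation property: every walk between two bags meets any bag on the tree path. -/
lemma decomp_walk_meets {H : SimpleGraph V} {T : SimpleGraph I} {X : I → Set V}
    (hD : IsTreeDecomp H T X) {u v : V} {i k j : I} (W : H.Walk u v)
    (hu : u ∈ X i) (hv : v ∈ X k) (pp : T.Walk i k) (hpp : pp.IsPath)
    (hj : j ∈ pp.support) : ∃ z ∈ W.support, z ∈ X j := by
  classical
  by_contra hno
  push_neg at hno
  obtain ⟨q, hq⟩ := decomp_walk_meets_aux hD hv W i hu hno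
  have huniq : q.toPath = (⟨pp, hpp⟩ : T.Path i k) :=
    hD.1.IsAcyclic.path_unique _ _
  have hjq : j ∈ (q.toPath : T.Walk i k).support := by rw [huniq]; exact hj
  exact hq j (q.support_toPath_subset hjq) rfl

/-- In a tree, one cannot go around an edge. -/
lemma tree_no_both_sides {T : SimpleGraph I} (hT : T.IsTree) {i j b : I}
    (hadj : T.Adj i j) (w1 : T.Walk j b) (h1 : i ∉ w1.support)
    (w2 : T.Walk b i) (h2 : j ∉ w2.support) : False := by
  have hbr := isAcyclic_iff_forall_edge_isBridge.mp hT.IsAcyclic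
    (e := s(i,j)) (by simpa using hadj)
  rw [isBridge_iff_adj_and_forall_walk_mem_edges] at hbr
  have := hbr (w1.append w2).reverse
  rw [Walk.edges_reverse, List.mem_reverse, Walk.edges_append, List.mem_append] at this
  rcases this with h | h
  · exact h1 (Walk.fst_mem_support_of_mem_edges w1 h)
  · exact h2 (Walk.snd_mem_support_of_mem_edges w2 h)

end Stmt18X

namespace Stmt18X
open Stmt18 SimpleGraph

variable {V I : Type}

/-- Walks within a class stay within the class. -/
lemma cls_lkd_self {G : SimpleGraph V} {S : Set V} {x y z : V}
    (hy : y ∈ cls G S x) (hz : z ∈ cls G S x) : Lkd G (cls G S x) y z := by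
  classical
  obtain ⟨p, hp⟩ := cls_lkd hy hz
  refine ⟨p, fun v hv => ?_⟩
  have hpre : Lkd G S y v := ⟨p.takeUntil v hv, fun b hb => hp b (p.support_takeUntil_subset hv hb)⟩
  exact lkd_mem_cls hy hpre

lemma cls_eq_or_disjoint {G : SimpleGraph V} {S : Set V} {x w : V}
    (h : ¬ Disjoint (cls G S x) (cls G S w)) : cls G S x = cls G S w := by
  obtain ⟨v, hvx, hvw⟩ := Set.not_disjoint_iff.mp h
  rw [cls_eq_of_lkd (hvx : Lkd G S x v), cls_eq_of_lkd (hvw : Lkd G S w v)]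

/-- The balanced-bag lemma: some bag of a tree-decomposition of `G`, removed from `R`,
leaves only components of size at most `|R|/2`. -/
lemma balanced_bag [Fintype V] {G : SimpleGraph V} {T : SimpleGraph I} {Y : I → Set V}
    (hD : IsTreeDecomp G T Y) (R : Set V) :
    ∃ i : I, ∀ w ∈ R \ Y i, 2 * (cls G (R \ Y i) w).ncard ≤ R.ncard := by
  classical
  by_contra hall
  push_neg at hall
  -- every node has a big class
  have hbig : ∀ i : I, ∃ w ∈ R \ Y i, R.ncard < 2 * (cls G (R \ Y i) w).ncard := by
    intro i; obtain ⟨w, hw, hcard⟩ := hall i; exact ⟨w, hw, hcard⟩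
  -- choose a big class of minimum cardinality
  set 𝒮 : Set ℕ := {n : ℕ | ∃ (i : I) (w : V), w ∈ R \ Y i ∧
      R.ncard < 2 * (cls G (R \ Y i) w).ncard ∧ (cls G (R \ Y i) w).ncard = n} with h𝒮
  have h𝒮ne : 𝒮.Nonempty := by
    obtain ⟨i⟩ := hD.1.isConnected.nonempty
    obtain ⟨w, hw, hcard⟩ := hbig i
    exact ⟨_, i, w, hw, hcard, rfl⟩
  obtain ⟨i₀, w₀, hw₀, hbig₀, hmin₀⟩ := Nat.sInf_mem h𝒮ne
  set nmin := sInf 𝒮 with hnmin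
  set Cmin : Set V := cls G (R \ Y i₀) w₀ with hCmin
  -- the anchor vertex and node
  have hw₀mem : w₀ ∈ Cmin := mem_cls_self hw₀
  obtain ⟨τ, hτ⟩ := hD.2.1 w₀
  -- two big classes at the same node coincide
  have two_big : ∀ (i : I) (u u' : V), u ∈ R \ Y i → u' ∈ R \ Y i →
      R.ncard < 2 * (cls G (R \ Y i) u).ncard → R.ncard < 2 * (cls G (R \ Y i) u').ncard →
      cls G (R \ Y i) u = cls G (R \ Y i) u' := by
    intro i u u' hu hu' hbu hbu'
    apply cls_eq_or_disjoint
    intro hdisj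
    have h1 : (cls G (R \ Y i) u ∪ cls G (R \ Y i) u').ncard ≤ R.ncard :=
      Set.ncard_le_ncard (Set.union_subset (cls_subset.trans Set.diff_subset)
        (cls_subset.trans Set.diff_subset)) R.toFinite
    rw [Set.ncard_union_eq hdisj (Set.toFinite _) (Set.toFinite _)] at h1
    omega
  -- main induction: no node close to τ can carry the class Cmin as a big class
  have main : ∀ m : ℕ, ∀ i : I, T.dist i τ ≤ m → ∀ w ∈ R \ Y i,
      R.ncard < 2 * (cls G (R \ Y i) w).ncard → cls G (R \ Y i) w = Cmin → False := by
    intro m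
    induction m with
    | zero =>
      intro i hdist w hw _ hCeq
      have hiteq : i = τ :=
        (hD.1.isConnected i τ).dist_eq_zero_iff.mp (Nat.le_zero.mp hdist)
      have hiY : w₀ ∈ R \ Y i := (hCeq ▸ hw₀mem : w₀ ∈ cls G (R \ Y i) w).mem_right
      exact hiY.2 (by rw [hiteq]; exact hτ)
    | succ m ih =>
      intro i hdist w hw hbigC hCeq
      by_cases hiτ : i = τ
      · have hiY : w₀ ∈ R \ Y i := (hCeq ▸ hw₀mem : w₀ ∈ cls G (R \ Y i) w).mem_right
        exact hiY.2 (by rw [hiτ]; exact hτ)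
      -- take the second node on the path from i to τ
      obtain ⟨p, hpath, hplen⟩ := (hD.1.isConnected i τ).exists_path_of_dist
      have hdpos : 0 < T.dist i τ :=
        (hD.1.isConnected i τ).pos_dist_of_ne hiτ
      cases p with
      | nil => exact hiτ rfl
      | @cons _ j _ hadj r =>
        have hrlen : r.length = T.dist i τ - 1 := by
          simp only [Walk.length_cons] at hplen; omega
        have hrpath : r.IsPath ∧ i ∉ r.support := by
          rw [Walk.cons_isPath_iff] at hpath; exact ⟨hpath.1, hpath.2⟩
        have hdistj : T.dist j τ ≤ m := by
          have := dist_le r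
          omega
        -- the big class at j
        obtain ⟨wj, hwj, hbigj⟩ := hbig j
        set Cj : Set V := cls G (R \ Y j) wj with hCj
        by_cases hsep : ∃ z, z ∈ Cj ∧ z ∈ Y i
        · -- sides of the edge i–j : contradiction, so Cj ∩ Cmin = ∅ and counting kills it
          obtain ⟨z, hzCj, hzYi⟩ := hsep
          have hdisj : Disjoint Cj Cmin := by
            rw [Set.disjoint_left]
            intro v hvCj hvCmin
            obtain ⟨mv, hmv⟩ := hD.2.1 v
            -- walk i → m_v avoiding j
            have hq2' : Lkd T {m | m ≠ j} i mv := by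
              obtain ⟨W, hW⟩ := (cls_lkd hzCj hvCj : Lkd G (R \ Y j) z v)
              exact decomp_walk_meets_aux hD (v := v) (k := mv) (j := j) hmv W i hzYi
                (fun b hb => (hW b hb).2)
            obtain ⟨q2, hq2⟩ := hq2'
            -- walk m_v → τ avoiding i
            have hq3' : Lkd T {m | m ≠ i} mv τ := by
              have hlk : Lkd G (R \ Y i) v w₀ := by
                have h1 : v ∈ cls G (R \ Y i) w := hCeq ▸ hvCmin
                have h2 : w₀ ∈ cls G (R \ Y i) w := hCeq ▸ hw₀mem
                exact cls_lkd h1 h2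
              obtain ⟨W, hW⟩ := hlk
              exact decomp_walk_meets_aux hD (v := w₀) (k := τ) (j := i) hτ W mv hmv
                (fun b hb => (hW b hb).2)
            obtain ⟨q3, hq3⟩ := hq3'
            -- assemble both sides of edge i–j
            exact tree_no_both_sides hD.1 hadj (r.append q3.reverse)
              (by
                intro hmem
                rcases (Walk.mem_support_append_iff _ _).mp hmem with h | h
                · exact hrpath.2 h
                · exact (hq3 i (by simpa using h)) rfl)
              q2.reverse
              (by
                intro hmem
                rw [Walk.support_reverse, List.mem_reverse] at hmem
                exact (hq2 j hmem) rfl)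
          -- counting
          have h1 : (Cj ∪ Cmin).ncard ≤ R.ncard :=
            Set.ncard_le_ncard (Set.union_subset (cls_subset.trans Set.diff_subset)
              (hCmin ▸ cls_subset.trans Set.diff_subset)) R.toFinite
          rw [Set.ncard_union_eq hdisj (Set.toFinite _) (Set.toFinite _)] at h1
          rw [hCeq] at hbigC
          omega
        · -- Cj avoids Y i entirely, hence Cj ⊆ Cmin, minimality gives equality
          push_neg at hsep
          have hCjsub : Cj ⊆ R \ Y i := by
            intro v hv
            exact ⟨(cls_subset hv).1, hsep v hv⟩
          have hwjYi : wj ∈ R \ Y i := hCjsub (mem_cls_self hwj)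
          have hsub2 : Cj ⊆ cls G (R \ Y i) wj := by
            intro v hv
            have := cls_lkd_self (mem_cls_self hwj) hv
            exact this.mono hCjsub
          have hbig' : R.ncard < 2 * (cls G (R \ Y i) wj).ncard := by
            have := Set.ncard_le_ncard hsub2 (Set.toFinite _)
            omega
          have heq : cls G (R \ Y i) wj = Cmin := by
            rw [← hCeq]
            exact two_big i wj w hwjYi hw hbig' (hCeq ▸ hbigC)
          -- Cj ⊆ Cmin and |Cmin| minimal, so Cj = Cmin
          have hCjCmin : Cj ⊆ Cmin := heq ▸ hsub2
          have hCjmin : nmin ≤ Cj.ncard :=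
            Nat.sInf_le ⟨j, wj, hwj, hbigj, rfl⟩
          have : Cj = Cmin := Set.eq_of_subset_of_ncard_le hCjCmin
            (by omega) (Set.toFinite _)
          exact ih j hdistj wj hwj hbigj this
  exact main (T.dist i₀ τ) i₀ le_rfl w₀ hw₀ hbig₀ rfl
end Stmt18X

namespace Stmt18X
open Stmt18 SimpleGraph

variable {V : Type}

/-- The parent graph of a parent function. -/
def parG (D : Set V) (par : V → V) : SimpleGraph V :=
  SimpleGraph.fromRel (fun a b => a ∈ D ∧ b = par a)

lemma parG_adj {D : Set V} {par : V → V} {a b : V} :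
    (parG D par).Adj a b ↔ a ≠ b ∧ ((a ∈ D ∧ b = par a) ∨ (b ∈ D ∧ a = par b)) :=
  SimpleGraph.fromRel_adj _ _ _

lemma parG_acyclic {D : Set V} {par : V → V} {φ : V → ℕ}
    (hφ : ∀ v ∈ D, φ (par v) < φ v) : (parG D par).IsAcyclic := by
  classical
  intro v c hc
  obtain ⟨u, hu⟩ : ∃ u, u ∈ c.support.argmax φ := by
    cases h : c.support.argmax φ with
    | none =>
      exact absurd (List.argmax_eq_none.mp h) (by simp)
    | some u => exact ⟨u, rfl⟩
  have humem : u ∈ c.support := List.argmax_mem hu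
  have hmax : ∀ a ∈ c.support, φ a ≤ φ u := fun a ha => List.le_of_mem_argmax ha hu
  have hc'cyc : (c.rotate u humem).IsCycle := hc.rotate humem
  have hsup : ∀ w ∈ (c.rotate u humem).support, w ∈ c.support := by
    intro w hw
    rw [Walk.support_eq_cons] at hw
    rcases List.mem_cons.mp hw with rfl | hw'
    · exact humem
    · exact List.mem_of_mem_tail ((Walk.support_rotate c u humem).mem_iff.mp hw')
  have hnbr : ∀ x, (parG D par).Adj u x → x ∈ c.support → x = par u := by
    intro x hadjx hx
    rcases (parG_adj.mp hadjx).2 with ⟨_, h⟩ | ⟨hxD, h⟩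
    · exact h
    · exact absurd (hmax x hx) (by have := h ▸ hφ x hxD; omega)
  obtain ⟨w₁, hadj1, q, hq⟩ := Walk.not_nil_iff.mp hc'cyc.not_nil
  have hlen : 3 ≤ (c.rotate u humem).length := hc'cyc.three_le_length
  have hqnotnil : ¬q.reverse.Nil := by
    rw [Walk.nil_iff_length_eq, Walk.length_reverse]
    rw [hq] at hlen
    simp only [Walk.length_cons] at hlen
    omega
  obtain ⟨w₂, hadj2, q2, hq2⟩ := Walk.not_nil_iff.mp hqnotnil
  have hw1 : w₁ = par u := by
    apply hnbr w₁ hadj1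
    apply hsup
    rw [hq, Walk.support_cons]
    exact List.mem_cons_of_mem _ (Walk.start_mem_support _)
  have hw2 : w₂ = par u := by
    apply hnbr w₂ hadj2
    apply hsup
    have h2 : w₂ ∈ q.reverse.support := by
      rw [hq2, Walk.support_cons]
      exact List.mem_cons_of_mem _ (Walk.start_mem_support _)
    rw [Walk.support_reverse, List.mem_reverse] at h2
    rw [hq, Walk.support_cons]
    exact List.mem_cons_of_mem _ h2
  have hedge1 : s(u, w₁) ∉ q.edges := by
    have hnd := hc'cyc.edges_nodup
    rw [hq, Walk.edges_cons] at hnd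
    exact (List.nodup_cons.mp hnd).1
  have hedge2 : s(u, w₂) ∈ q.edges := by
    have h3 : s(u, w₂) ∈ q.reverse.edges := by
      rw [hq2, Walk.edges_cons]
      exact List.mem_cons_self
    rwa [Walk.edges_reverse, List.mem_reverse] at h3
  rw [hw2, ← hw1] at hedge2
  exact hedge1 hedge2

end Stmt18X

namespace Stmt18X
open Stmt18 SimpleGraph

variable {V : Type}

/-- distance within a set of vertices -/
noncomputable def wdist (G : SimpleGraph V) (R : Set V) (x y : V) : ℕ :=
  sInf {n | ∃ p : G.Walk x y, (∀ z ∈ p.support, z ∈ R) ∧ p.length = n}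

lemma wdist_le {G : SimpleGraph V} {R : Set V} {x y : V} (p : G.Walk x y)
    (hp : ∀ z ∈ p.support, z ∈ R) : wdist G R x y ≤ p.length :=
  Nat.sInf_le ⟨p, hp, rfl⟩

lemma wdist_exists {G : SimpleGraph V} {R : Set V} {x y : V} (h : Lkd G R x y) :
    ∃ p : G.Walk x y, (∀ z ∈ p.support, z ∈ R) ∧ p.length = wdist G R x y := by
  obtain ⟨p, hp⟩ := h
  exact Nat.sInf_mem (⟨p.length, p, hp, rfl⟩ :
    Set.Nonempty {n | ∃ p : G.Walk x y, (∀ z ∈ p.support, z ∈ R) ∧ p.length = n})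

/-- Shortest-path forest of a region. -/
lemma exists_spt {G : SimpleGraph V} {R : Set V} {r : V} (hr : r ∈ R)
    (hconn : ∀ x ∈ R, Lkd G R x r) :
    ∃ F : SimpleGraph V, F ≤ G ∧ F.IsAcyclic ∧ (∀ a b, F.Adj a b → a ∈ R ∧ b ∈ R) ∧
      ∀ x ∈ R, ∃ q : F.Walk x r, q.length ≤ wdist G R x r := by
  classical
  have hpar : ∀ v, v ∈ R \ {r} → ∃ w, G.Adj v w ∧ w ∈ R ∧
      wdist G R w r + 1 ≤ wdist G R v r := by
    rintro v ⟨hvR, hvr⟩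
    obtain ⟨p, hp, hlen⟩ := wdist_exists (hconn v hvR)
    cases p with
    | nil => exact absurd rfl hvr
    | @cons _ w _ hadj q =>
      have hwmem : w ∈ R := by
        apply hp w
        rw [Walk.support_cons]
        exact List.mem_cons_of_mem _ (Walk.start_mem_support _)
      have hq : wdist G R w r ≤ q.length := by
        apply wdist_le q
        intro z hz
        apply hp z
        rw [Walk.support_cons]
        exact List.mem_cons_of_mem _ hz
      refine ⟨w, hadj, hwmem, ?_⟩
      rw [← hlen]
      simp only [Walk.length_cons]
      omega
  choose! par hadj hparR hlt using hpar
  set D : Set V := R \ {r} with hD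
  set F := parG D par with hF
  have hFG : F ≤ G := by
    intro a b hab
    rcases (parG_adj.mp hab).2 with ⟨haD, rfl⟩ | ⟨hbD, rfl⟩
    · exact hadj a haD
    · exact (hadj b hbD).symm
  have hsupp : ∀ a b, F.Adj a b → a ∈ R ∧ b ∈ R := by
    intro a b hab
    rcases (parG_adj.mp hab).2 with ⟨haD, rfl⟩ | ⟨hbD, rfl⟩
    · exact ⟨haD.1, hparR a haD⟩
    · exact ⟨hparR b hbD, hbD.1⟩
  have hacyc : F.IsAcyclic := parG_acyclic (φ := fun v => wdist G R v r)
    (fun v hv => by show wdist G R (par v) r < wdist G R v r; have := hlt v hv; omega)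
  refine ⟨F, hFG, hacyc, hsupp, ?_⟩
  have : ∀ (n : ℕ) (x : V), x ∈ R → wdist G R x r ≤ n →
      ∃ q : F.Walk x r, q.length ≤ wdist G R x r := by
    intro n
    induction n with
    | zero =>
      intro x hx hle
      by_cases hxr : x = r
      · subst hxr; exact ⟨Walk.nil, by simp⟩
      · exfalso
        have := hlt x ⟨hx, hxr⟩
        omega
    | succ n ih =>
      intro x hx hle
      by_cases hxr : x = r
      · subst hxr; exact ⟨Walk.nil, by simp⟩
      · have hxD : x ∈ D := ⟨hx, hxr⟩
        have h1 := hlt x hxD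
        obtain ⟨q, hq⟩ := ih (par x) (hparR x hxD) (by omega)
        have hFadj : F.Adj x (par x) :=
          parG_adj.mpr ⟨(hadj x hxD).ne, Or.inl ⟨hxD, rfl⟩⟩
        refine ⟨Walk.cons hFadj q, ?_⟩
        simp only [Walk.length_cons]
        omega
  intro x hx
  exact this (wdist G R x r) x hx le_rfl

/-- A union of forests on pairwise disjoint vertex sets is a forest. -/
lemma iSup_forest {ι : Type} {𝔉 : ι → SimpleGraph V} {S : ι → Set V}
    (hsets : ∀ a u w, (𝔉 a).Adj u w → u ∈ S a ∧ w ∈ S a)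
    (hdisj : ∀ a b, a ≠ b → Disjoint (S a) (S b))
    (hacyc : ∀ a, (𝔉 a).IsAcyclic) : (⨆ a, 𝔉 a).IsAcyclic := by
  classical
  have stays : ∀ {u v' : V} (p : (⨆ a, 𝔉 a).Walk u v') (a₀ : ι), u ∈ S a₀ →
      ∀ e ∈ p.edges, e ∈ (𝔉 a₀).edgeSet := by
    intro u v' p
    induction p with
    | nil => intro a₀ _ e he; simp at he
    | @cons x w y hxw q ih =>
      intro a₀ hx e he
      obtain ⟨b, hb⟩ := iSup_adj.mp hxw
      have hxb := (hsets b x w hb).1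
      have hba : b = a₀ := by
        by_contra hne
        exact (hdisj b a₀ hne).ne_of_mem hxb hx rfl
      subst hba
      have hwS : w ∈ S b := (hsets b x w hb).2
      rw [Walk.edges_cons] at he
      rcases List.mem_cons.mp he with rfl | he'
      · exact hb
      · exact ih b hwS e he'
  intro v c hc
  obtain ⟨w₁, hadj1, q, hq⟩ := Walk.not_nil_iff.mp hc.not_nil
  obtain ⟨a₀, ha₀⟩ := iSup_adj.mp hadj1
  have hv : v ∈ S a₀ := (hsets a₀ v w₁ ha₀).1
  have hedges := stays c a₀ hv
  exact hacyc a₀ (c.transfer (𝔉 a₀) hedges) (hc.transfer hedges)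

/-- One augmentation step: add an edge between two components. -/
lemma aug_step [Fintype V] {G F : SimpleGraph V} (hG : G.Connected) (hFG : F ≤ G)
    (hF : F.IsAcyclic) (hnc : ¬F.Connected) :
    ∃ F', F ≤ F' ∧ F' ≤ G ∧ F'.IsAcyclic ∧ F.edgeSet.ncard < F'.edgeSet.ncard := by
  classical
  -- find a G-edge between two F-components
  have hedge : ∃ u v, G.Adj u v ∧ ¬F.Reachable u v := by
    by_contra hno
    push_neg at hno
    apply hnc
    have trans : ∀ (y x : V) (p : G.Walk x y), F.Reachable x y := by
      intro y x p
      induction p with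
      | nil => exact Reachable.refl _
      | @cons a b c hab q ih => exact (hno a b hab).trans ih
    haveI : Nonempty V := hG.nonempty
    exact Connected.mk (fun x y => trans y x (hG.preconnected x y).some)
  obtain ⟨u, v, huv, hnr⟩ := hedge
  set e : Sym2 V := s(u, v) with he
  set F' := F ⊔ fromEdgeSet {e} with hF'
  have hFF' : F ≤ F' := le_sup_left
  have hF'G : F' ≤ G := by
    refine sup_le hFG ?_
    intro a b hab
    rw [fromEdgeSet_adj] at hab
    obtain ⟨hab1, hab2⟩ := hab
    rw [Set.mem_singleton_iff, he, Sym2.eq_iff] at hab1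
    rcases hab1 with ⟨rfl, rfl⟩ | ⟨rfl, rfl⟩
    · exact huv
    · exact huv.symm
  have hnFadj : ¬F.Adj u v := fun h => hnr h.reachable
  have hsdiff : F' \ fromEdgeSet {e} = F := by
    ext a b
    simp only [sdiff_adj, hF', sup_adj, fromEdgeSet_adj, Set.mem_singleton_iff]
    constructor
    · rintro ⟨h1 | h2, h3⟩
      · exact h1
      · exact absurd ⟨h2.1, h2.2⟩ h3
    · intro hab
      refine ⟨Or.inl hab, ?_⟩
      rintro ⟨heq, -⟩
      rw [he, Sym2.eq_iff] at heq
      rcases heq with ⟨rfl, rfl⟩ | ⟨rfl, rfl⟩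
      · exact hnFadj hab
      · exact hnFadj hab.symm
  have hacyc' : F'.IsAcyclic := by
    intro w c hc
    by_cases hec : e ∈ c.edges
    · have : F'.Adj u v ∧ (F' \ fromEdgeSet {s(u,v)}).Reachable u v := by
        rw [← he]
        exact adj_and_reachable_delete_edges_iff_exists_cycle.mpr ⟨w, c, hc, hec⟩
      rw [he] at hsdiff
      rw [hsdiff] at this
      exact hnr this.2
    · have hedges : ∀ e' ∈ c.edges, e' ∈ F.edgeSet := by
        intro e' he'
        have h1 : e' ∈ F'.edgeSet := c.edges_subset_edgeSet he'
        rw [hF', edgeSet_sup] at h1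
        rcases h1 with h1 | h1
        · exact h1
        · rw [edgeSet_fromEdgeSet, Set.mem_diff, Set.mem_singleton_iff] at h1
          exact absurd (h1.1 ▸ he') hec
      exact hF (c.transfer F hedges) (hc.transfer hedges)
  refine ⟨F', hFF', hF'G, hacyc', ?_⟩
  have hee : F'.edgeSet = insert e F.edgeSet := by
    rw [hF', edgeSet_sup, edgeSet_fromEdgeSet]
    have : ({e} : Set (Sym2 V)) \ Sym2.diagSet = {e} := by
      ext e'
      simp only [Set.mem_diff, Set.mem_singleton_iff, Sym2.mem_diagSet]
      constructor
      · rintro ⟨h1, -⟩; exact h1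
      · rintro rfl
        refine ⟨rfl, fun hd => ?_⟩
        rw [he] at hd
        exact huv.ne (Sym2.isDiag_iff_proj_eq.mp hd)
    rw [this, Set.union_singleton]
  have hnotmem : e ∉ F.edgeSet := by
    rw [he, mem_edgeSet]; exact hnFadj
  rw [hee, Set.ncard_insert_of_notMem hnotmem (Set.toFinite _)]
  omega

/-- Any acyclic subgraph of a connected graph extends to a spanning tree. -/
lemma exists_tree_extension [Fintype V] {G F : SimpleGraph V} (hG : G.Connected)
    (hFG : F ≤ G) (hF : F.IsAcyclic) : ∃ TT, F ≤ TT ∧ TT ≤ G ∧ TT.IsTree := by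
  classical
  have main : ∀ (d : ℕ) (F₀ : SimpleGraph V),
      (⊤ : SimpleGraph V).edgeSet.ncard - F₀.edgeSet.ncard ≤ d →
      F₀ ≤ G → F₀.IsAcyclic → ∃ TT, F₀ ≤ TT ∧ TT ≤ G ∧ TT.IsTree := by
    intro d
    induction d with
    | zero =>
      intro F₀ hd hFG₀ hF₀
      by_cases hc : F₀.Connected
      · exact ⟨F₀, le_rfl, hFG₀, ⟨hc, hF₀⟩⟩
      · exfalso
        obtain ⟨F', hle, hleG, hacyc, hcard⟩ := aug_step hG hFG₀ hF₀ hc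
        have h1 : F'.edgeSet.ncard ≤ (⊤ : SimpleGraph V).edgeSet.ncard :=
          Set.ncard_le_ncard (edgeSet_mono le_top) (Set.toFinite _)
        omega
    | succ d ih =>
      intro F₀ hd hFG₀ hF₀
      by_cases hc : F₀.Connected
      · exact ⟨F₀, le_rfl, hFG₀, ⟨hc, hF₀⟩⟩
      · obtain ⟨F', hle, hleG, hacyc, hcard⟩ := aug_step hG hFG₀ hF₀ hc
        have h1 : F'.edgeSet.ncard ≤ (⊤ : SimpleGraph V).edgeSet.ncard :=
          Set.ncard_le_ncard (edgeSet_mono le_top) (Set.toFinite _)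
        obtain ⟨TT, h2, h3, h4⟩ := ih F' (by omega) hleG hacyc
        exact ⟨TT, hle.trans h2, h3, h4⟩
  exact main _ F le_rfl hFG hF

end Stmt18X

namespace Stmt18X
open Stmt18 SimpleGraph

variable {V : Type}

/-- Spanning tree of `G` containing shortest-path trees of disjoint regions. -/
lemma exists_level_tree [Fintype V] {G : SimpleGraph V} (hG : G.Connected) {ι : Type}
    (S : ι → Set V) (rt : ι → V)
    (hdisj : ∀ a b, a ≠ b → Disjoint (S a) (S b)) (hrt : ∀ a, rt a ∈ S a)
    (hconn : ∀ a, ∀ x ∈ S a, Lkd G (S a) x (rt a)) :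
    ∃ TT, TT ≤ G ∧ TT.IsTree ∧
      ∀ a, ∀ x ∈ S a, TT.dist x (rt a) ≤ wdist G (S a) x (rt a) := by
  classical
  choose F hFG hacyc hsupp hwalk using fun a => exists_spt (hrt a) (hconn a)
  have hFs : (⨆ a, F a) ≤ G := iSup_le hFG
  have hFa : (⨆ a, F a).IsAcyclic := iSup_forest hsupp hdisj hacyc
  obtain ⟨TT, hTT1, hTT2, hTT3⟩ := exists_tree_extension hG hFs hFa
  refine ⟨TT, hTT2, hTT3, fun a x hx => ?_⟩
  obtain ⟨q, hq⟩ := hwalk a x hx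
  have hle : F a ≤ TT := (le_iSup F a).trans hTT1
  calc TT.dist x (rt a) ≤ (q.mapLe hle).length := dist_le _
    _ = q.length := Walk.length_map _ _
    _ ≤ wdist G (S a) x (rt a) := hq

/-- The region hierarchy determined by a bag choice function. -/
def RegF (G : SimpleGraph V) (bag : Set V → Set V) : ℕ → Set (Set V)
  | 0 => {Set.univ}
  | (ℓ+1) => ⋃ R ∈ RegF G bag ℓ, {C | ∃ x ∈ R \ bag R, C = cls G (R \ bag R) x}

lemma RegF_zero {G : SimpleGraph V} {bag : Set V → Set V} : RegF G bag 0 = {Set.univ} := rfl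

lemma RegF_succ {G : SimpleGraph V} {bag : Set V → Set V} {ℓ : ℕ} :
    RegF G bag (ℓ+1) = ⋃ R ∈ RegF G bag ℓ, {C | ∃ x ∈ R \ bag R, C = cls G (R \ bag R) x} := rfl

lemma RegF_size [Fintype V] {G : SimpleGraph V} {bag : Set V → Set V}
    (hbal : ∀ R : Set V, ∀ w ∈ R \ bag R, 2 * (cls G (R \ bag R) w).ncard ≤ R.ncard) :
    ∀ ℓ, ∀ R ∈ RegF G bag ℓ, 2^ℓ * R.ncard ≤ Fintype.card V := by
  intro ℓ
  induction ℓ with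
  | zero =>
    intro R hR
    rw [RegF_zero, Set.mem_singleton_iff] at hR
    subst hR
    simp [Set.ncard_univ]
  | succ ℓ ih =>
    intro C hC
    rw [RegF_succ, Set.mem_iUnion₂] at hC
    obtain ⟨R, hR, x, hx, rfl⟩ := hC
    have h1 := hbal R x hx
    have h2 := ih R hR
    calc 2^(ℓ+1) * (cls G (R \ bag R) x).ncard
        = 2^ℓ * (2 * (cls G (R \ bag R) x).ncard) := by ring
      _ ≤ 2^ℓ * R.ncard := Nat.mul_le_mul_left _ h1
      _ ≤ Fintype.card V := h2

lemma RegF_disj {G : SimpleGraph V} {bag : Set V → Set V} :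
    ∀ ℓ, ∀ R₁ ∈ RegF G bag ℓ, ∀ R₂ ∈ RegF G bag ℓ, R₁ ≠ R₂ → Disjoint R₁ R₂ := by
  intro ℓ
  induction ℓ with
  | zero =>
    intro R₁ h₁ R₂ h₂ hne
    rw [RegF_zero, Set.mem_singleton_iff] at h₁ h₂
    exact absurd (h₁.trans h₂.symm) hne
  | succ ℓ ih =>
    intro C₁ h₁ C₂ h₂ hne
    rw [RegF_succ, Set.mem_iUnion₂] at h₁ h₂
    obtain ⟨R₁, hR₁, x₁, hx₁, rfl⟩ := h₁
    obtain ⟨R₂, hR₂, x₂, hx₂, rfl⟩ := h₂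
    by_cases hRR : R₁ = R₂
    · subst hRR
      by_contra hd
      exact hne (cls_eq_or_disjoint hd)
    · exact Set.disjoint_of_subset (cls_subset.trans Set.diff_subset)
        (cls_subset.trans Set.diff_subset) (ih R₁ hR₁ R₂ hR₂ hRR)

lemma RegF_conn {G : SimpleGraph V} {bag : Set V → Set V} (hG : G.Connected) :
    ∀ ℓ, ∀ R ∈ RegF G bag ℓ, ∀ x ∈ R, ∀ y ∈ R, Lkd G R x y := by
  intro ℓ
  cases ℓ with
  | zero =>
    intro R hR x hx y hy
    rw [RegF_zero, Set.mem_singleton_iff] at hR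
    subst hR
    obtain ⟨p⟩ := hG.preconnected x y
    exact ⟨p, fun z _ => Set.mem_univ z⟩
  | succ ℓ =>
    intro C hC x hx y hy
    rw [RegF_succ, Set.mem_iUnion₂] at hC
    obtain ⟨R, hR, x₀, hx₀, rfl⟩ := hC
    exact cls_lkd_self hx hy

lemma RegF_exit {G : SimpleGraph V} {bag : Set V → Set V} (hbag : ∀ R, bag R ⊆ R) :
    ∀ ℓ, ∀ R ∈ RegF G bag ℓ, ∀ u w : V, u ∈ R → w ∉ R → G.Adj u w →
      ∃ ℓ' < ℓ, ∃ R' ∈ RegF G bag ℓ', R ⊆ R' ∧ w ∈ bag R' := by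
  intro ℓ
  induction ℓ with
  | zero =>
    intro R hR u w hu hw _
    rw [RegF_zero, Set.mem_singleton_iff] at hR
    subst hR
    exact absurd (Set.mem_univ w) hw
  | succ ℓ ih =>
    intro C hC u w hu hw hadj
    rw [RegF_succ, Set.mem_iUnion₂] at hC
    obtain ⟨R, hR, x₀, hx₀, rfl⟩ := hC
    have huR : u ∈ R \ bag R := cls_subset hu
    by_cases hwR : w ∈ R
    · by_cases hwb : w ∈ bag R
      · exact ⟨ℓ, Nat.lt_succ_self _, R, hR, cls_subset.trans Set.diff_subset, hwb⟩
      · exfalso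
        exact hw (lkd_mem_cls hu (Lkd.of_adj hadj huR ⟨hwR, hwb⟩))
    · obtain ⟨ℓ', hℓ', R', hR', hsub, hwb⟩ := ih R hR u w huR.1 hwR hadj
      exact ⟨ℓ', hℓ'.trans (Nat.lt_succ_self _), R', hR',
        (cls_subset.trans Set.diff_subset).trans hsub, hwb⟩

end Stmt18X


open Stmt18 Stmt18X in
/-- Every connected graph with `n > k` vertices admitting a multiplicative
`t`-spanner of tree-width at most `k−1` admits a system of at most `k·(1+log₂ n)`
collective additive tree `(2⌈t/2⌉·(1+log₂ n))`-spanners. -/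
theorem stmt18 {V : Type} [Fintype V] (G : SimpleGraph V) (hG : G.Connected)
    (t k : ℕ) (ht : 1 ≤ t) (hk : 1 ≤ k) (hn : k < Fintype.card V)
    (h : ∃ H : SimpleGraph V, H ≤ G ∧
      (∀ u v : V, H.edist u v ≤ (t : ℕ∞) * G.edist u v) ∧ treeWidth H ≤ k - 1) :
    ∃ (m : ℕ) (𝒯 : Fin m → SimpleGraph V),
      (m : ℝ) ≤ (k : ℝ) * (1 + Real.logb 2 (Fintype.card V)) ∧
      (∀ i, 𝒯 i ≤ G ∧ (𝒯 i).IsTree) ∧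
      ∀ x y : V, ∃ i, ((𝒯 i).dist x y : ℝ) ≤
        (G.dist x y : ℝ) + 2 * (((t + 1) / 2 : ℕ) : ℝ) * (1 + Real.logb 2 (Fintype.card V)) := by
  classical
  obtain ⟨H, hHG, hHt, htw⟩ := h
  haveI : Nonempty V := hG.nonempty
  have hn2 : 2 ≤ Fintype.card V := by omega
  set c : ℕ := (t + 1) / 2 with hc
  have hc1 : 1 ≤ c := by omega
  have ht2c : t ≤ 2 * c := by omega
  -- the spanner is connected
  have hHconn : H.Connected := by
    have hpre : H.Preconnected := by
      intro u v
      apply reachable_of_edist_ne_top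
      intro htop
      have h1 : G.edist u v ≠ ⊤ := edist_ne_top_iff_reachable.mpr (hG.preconnected u v)
      have h2 := hHt u v
      rw [htop, top_le_iff] at h2
      exact WithTop.mul_ne_top (ENat.coe_ne_top t) h1 h2
    exact Connected.mk hpre
  -- spanner distance on G-edges
  have hedge : ∀ u v : V, G.Adj u v → H.dist u v ≤ t := by
    intro u v huv
    have h1 : G.edist u v = 1 := edist_eq_one_iff_adj.mpr huv
    have h2 : H.edist u v ≤ (t : ℕ∞) := by
      calc H.edist u v ≤ t * G.edist u v := hHt u v
        _ = t := by rw [h1, mul_one]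
    have h3 : H.edist u v ≠ ⊤ := by
      intro htop
      rw [htop, top_le_iff] at h2
      exact (ENat.coe_ne_top t) h2
    obtain ⟨p, hp⟩ := exists_walk_of_edist_ne_top h3
    have hplen : (p.length : ℕ∞) ≤ (t : ℕ∞) := hp ▸ h2
    exact le_trans (dist_le p) (by exact_mod_cast hplen)
  -- a tree-decomposition of H with bags of size at most k
  have hmem : ∃ (I : Type) (T : SimpleGraph I) (X : I → Set V),
      IsTreeDecomp H T X ∧ ∀ i, (X i).ncard ≤ treeWidth H + 1 := by
    have hne : {w : ℕ | ∃ (I : Type) (T : SimpleGraph I) (X : I → Set V),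
        IsTreeDecomp H T X ∧ ∀ i, (X i).ncard ≤ w + 1}.Nonempty := by
      refine ⟨Fintype.card V - 1, Unit, ⊥, fun _ => Set.univ, ⟨?_, ?_, ?_, ?_⟩, ?_⟩
      · constructor
        · exact Connected.mk (fun a b => by cases a; cases b; exact Reachable.refl _)
        · exact isAcyclic_bot
      · exact fun v => ⟨(), Set.mem_univ v⟩
      · exact fun u v _ => ⟨(), Set.mem_univ u, Set.mem_univ v⟩
      · exact fun i j kk p hp hj => by intro z hz; exact Set.mem_univ z
      · intro i
        rw [Set.ncard_univ, Nat.card_eq_fintype_card]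
        omega
    exact Nat.sInf_mem hne
  obtain ⟨I, T, X, hDX, hXk'⟩ := hmem
  have hXk : ∀ i, (X i).ncard ≤ k := by
    intro i
    have := hXk' i
    omega
  haveI : Nonempty I := hDX.1.isConnected.nonempty
  -- enumeration of each bag by Fin k
  have henum : ∀ i : I, ∃ e : Fin k → V, ∀ x ∈ X i, ∃ j : Fin k, e j = x := by
    intro i
    have hfin : (X i).Finite := Set.toFinite _
    set l := hfin.toFinset.toList with hl
    have hlen : l.length ≤ k := by
      rw [hl, Finset.length_toList, ← Set.ncard_eq_toFinset_card (X i) hfin]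
      exact hXk i
    refine ⟨fun j => l.getD j.val (Classical.arbitrary V), ?_⟩
    intro x hx
    have hxl : x ∈ l := by
      rw [hl, Finset.mem_toList, Set.Finite.mem_toFinset]
      exact hx
    obtain ⟨idx, hidx, hval⟩ := List.mem_iff_getElem.mp hxl
    have hidxk : idx < k := lt_of_lt_of_le hidx hlen
    refine ⟨⟨idx, hidxk⟩, ?_⟩
    show l.getD idx (Classical.arbitrary V) = x
    rw [List.getD_eq_getElem l _ hidx]
    exact hval
  choose eF heF using henum
  -- the induced tree-decomposition of G with disk bags
  set Y : I → Set V := fun i => {v | ∃ x ∈ X i, H.dist v x ≤ c} with hYdef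
  have hDY : IsTreeDecomp G T Y := by
    refine ⟨hDX.1, ?_, ?_, ?_⟩
    · intro v
      obtain ⟨i, hi⟩ := hDX.2.1 v
      exact ⟨i, v, hi, by rw [SimpleGraph.dist_self]; exact Nat.zero_le c⟩
    · intro u v huv
      have hd : H.dist u v ≤ t := hedge u v huv
      obtain ⟨p, hp⟩ := (hHconn.preconnected u v).exists_walk_length_eq_dist
      obtain ⟨z, q₁, q₂, h1, h2⟩ := exists_mid p c c (by omega)
      obtain ⟨i, hzi⟩ := hDX.2.1 z
      refine ⟨i, ⟨z, hzi, le_trans (dist_le q₁) h1⟩, ⟨z, hzi, ?_⟩⟩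
      have := dist_le q₂.reverse
      rw [Walk.length_reverse] at this
      exact le_trans this h2
    · intro i j kk pp hpp hj v hv
      obtain ⟨⟨x, hx, hdx⟩, ⟨y, hy, hdy⟩⟩ := hv
      obtain ⟨p₁, hp₁⟩ := (hHconn.preconnected v x).exists_walk_length_eq_dist
      obtain ⟨p₂, hp₂⟩ := (hHconn.preconnected v y).exists_walk_length_eq_dist
      obtain ⟨z, hzW, hzXj⟩ := decomp_walk_meets hDX (p₁.reverse.append p₂) hx hy pp hpp hj
      rcases (Walk.mem_support_append_iff _ _).mp hzW with hz1 | hz2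
      · rw [Walk.support_reverse, List.mem_reverse] at hz1
        refine ⟨z, hzXj, ?_⟩
        have := dist_le (p₁.takeUntil z hz1)
        have h3 := Walk.length_takeUntil_le p₁ hz1
        omega
      · refine ⟨z, hzXj, ?_⟩
        have := dist_le (p₂.takeUntil z hz2)
        have h3 := Walk.length_takeUntil_le p₂ hz2
        omega
  -- balanced bags
  have hbalall : ∀ R : Set V, ∃ i, ∀ w ∈ R \ Y i,
      2 * (cls G (R \ Y i) w).ncard ≤ R.ncard := fun R => balanced_bag hDY R
  choose bagNode hbagNode using hbalall
  set bagF : Set V → Set V := fun R => Y (bagNode R) ∩ R with hbagF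
  have hbagsub : ∀ R, bagF R ⊆ R := fun R => Set.inter_subset_right
  have hdiffeq : ∀ R : Set V, R \ bagF R = R \ Y (bagNode R) := by
    intro R
    rw [hbagF]
    ext z
    simp only [Set.mem_diff, Set.mem_inter_iff]
    tauto
  have hbal : ∀ R : Set V, ∀ w ∈ R \ bagF R,
      2 * (cls G (R \ bagF R) w).ncard ≤ R.ncard := by
    intro R
    rw [hdiffeq R]
    exact hbagNode R
  set Reg := RegF G bagF with hRegDef
  set rootF : Set V → Fin k → V := fun R j => eF (bagNode R) j with hrootF
  -- the climbing lemma
  have climb : ∀ ℓ : ℕ, ∀ R ∈ Reg ℓ, ∀ b ∈ bagF R, ∃ ℓ'' ≤ ℓ, ∃ R'' ∈ Reg ℓ'', R ⊆ R'' ∧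
      ∃ j : Fin k, rootF R'' j ∈ R'' ∧ ∃ q : G.Walk b (rootF R'' j),
        (∀ z ∈ q.support, z ∈ R'') ∧ q.length ≤ (ℓ - ℓ'' + 1) * c := by
    intro ℓ
    induction ℓ using Nat.strong_induction_on with
    | _ ℓ ih =>
      intro R hR b hb
      obtain ⟨hbY, hbR⟩ := hb
      obtain ⟨x₀, hx₀X, hx₀d⟩ := hbY
      obtain ⟨Q, hQlen⟩ := (hHconn.preconnected b x₀).exists_walk_length_eq_dist
      set QG := Q.mapLe hHG with hQG
      have hQGlen : QG.length ≤ c := by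
        have h1 : QG.length = Q.length := Walk.length_map _ Q
        omega
      by_cases hin : ∀ z ∈ QG.support, z ∈ R
      · obtain ⟨j, hj⟩ := heF (bagNode R) x₀ hx₀X
        have hrooteq : rootF R j = x₀ := by rw [hrootF]; exact hj
        refine ⟨ℓ, le_rfl, R, hR, subset_rfl, j, ?_, ?_⟩
        · rw [hrooteq]
          exact hin x₀ (Walk.end_mem_support _)
        · refine ⟨QG.copy rfl hrooteq.symm, ?_, ?_⟩
          · rw [Walk.support_copy]
            exact hin
          · rw [Walk.length_copy]
            calc QG.length ≤ c := hQGlen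
              _ ≤ (ℓ - ℓ + 1) * c := by rw [Nat.sub_self]; omega
      · push_neg at hin
        obtain ⟨z₀, hz₀, hz₀R⟩ := hin
        obtain ⟨w, u, q, hw, hu, hadj, hqsupp, hqlen⟩ :=
          first_exit (QG.takeUntil z₀ hz₀) hbR hz₀R
        have hqc : q.length ≤ c := by
          have := Walk.length_takeUntil_le QG hz₀
          omega
        obtain ⟨ℓ', hℓ', R', hR', hsub, hwb⟩ := RegF_exit hbagsub ℓ R hR u w hu hw hadj
        obtain ⟨ℓ'', hℓ'', R'', hR'', hsub', j, hrootin, q', hq'supp, hq'len⟩ :=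
          ih ℓ' hℓ' R' hR' w hwb
        refine ⟨ℓ'', le_trans hℓ'' (le_of_lt hℓ'), R'', hR'', hsub.trans hsub', j, hrootin,
          q.append q', ?_, ?_⟩
        · intro z hz
          rcases (Walk.mem_support_append_iff _ _).mp hz with h1 | h1
          · rcases hqsupp z h1 with rfl | h2
            · exact hsub' (hbagsub R' hwb)
            · exact hsub' (hsub h2)
          · exact hq'supp z h1
        · rw [Walk.length_append]
          have harith : c + (ℓ' - ℓ'' + 1) * c ≤ (ℓ - ℓ'' + 1) * c := by
            have h1 : ℓ' - ℓ'' + 2 ≤ ℓ - ℓ'' + 1 := by omega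
            calc c + (ℓ' - ℓ'' + 1) * c = (ℓ' - ℓ'' + 2) * c := by ring
              _ ≤ (ℓ - ℓ'' + 1) * c := Nat.mul_le_mul_right c h1
          omega
  -- the main splitting lemma
  have main : ∀ (fuel : ℕ) (R : Set V) (ℓ : ℕ), R ∈ Reg ℓ → R.ncard ≤ fuel →
      ∀ (x y : V) (P : G.Walk x y), (∀ z ∈ P.support, z ∈ R) →
      ∃ (ℓ'' d : ℕ) (R'' : Set V) (j : Fin k), R'' ∈ Reg ℓ'' ∧ x ∈ R'' ∧ y ∈ R'' ∧
        rootF R'' j ∈ R'' ∧ ℓ'' ≤ d ∧ 2^d ≤ Fintype.card V ∧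
        ∃ (q₁ : G.Walk x (rootF R'' j)) (q₂ : G.Walk y (rootF R'' j)),
          (∀ z ∈ q₁.support, z ∈ R'') ∧ (∀ z ∈ q₂.support, z ∈ R'') ∧
          q₁.length + q₂.length ≤ P.length + 2 * ((d + 1) * c) := by
    intro fuel
    induction fuel with
    | zero =>
      intro R ℓ hR hcard x y P hP
      exfalso
      have hx : x ∈ R := hP x (Walk.start_mem_support _)
      have h1 : 0 < R.ncard := (Set.ncard_pos (Set.toFinite _)).mpr ⟨x, hx⟩
      omega
    | succ fuel ih =>
      intro R ℓ hR hcard x y P hP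
      have hx : x ∈ R := hP x (Walk.start_mem_support _)
      have hy : y ∈ R := hP y (Walk.end_mem_support _)
      by_cases hhit : ∃ b ∈ P.support, b ∈ bagF R
      · obtain ⟨b, hbP, hbbag⟩ := hhit
        obtain ⟨ℓ'', hℓ'', R'', hR'', hsub, j, hrootin, q, hqsupp, hqlen⟩ :=
          climb ℓ R hR b hbbag
        have h2ℓ : 2^ℓ ≤ Fintype.card V := by
          have h1 := RegF_size hbal ℓ R hR
          have h2 : 0 < R.ncard := (Set.ncard_pos (Set.toFinite _)).mpr ⟨x, hx⟩
          have h3 : 2^ℓ * 1 ≤ 2^ℓ * R.ncard := Nat.mul_le_mul_left _ h2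
          omega
        refine ⟨ℓ'', ℓ, R'', j, hR'', hsub hx, hsub hy, hrootin, hℓ'', h2ℓ, ?_⟩
        have hPlen : (P.takeUntil b hbP).length + (P.dropUntil b hbP).length = P.length := by
          rw [← Walk.length_append, Walk.take_spec]
        refine ⟨(P.takeUntil b hbP).append q, ((P.dropUntil b hbP).reverse).append q, ?_, ?_, ?_⟩
        · intro z hz
          rcases (Walk.mem_support_append_iff _ _).mp hz with h1 | h1
          · exact hsub (hP z (P.support_takeUntil_subset hbP h1))
          · exact hqsupp z h1
        · intro z hz
          rcases (Walk.mem_support_append_iff _ _).mp hz with h1 | h1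
          · rw [Walk.support_reverse, List.mem_reverse] at h1
            exact hsub (hP z (P.support_dropUntil_subset hbP h1))
          · exact hqsupp z h1
        · rw [Walk.length_append, Walk.length_append, Walk.length_reverse]
          have harith : (ℓ - ℓ'' + 1) * c ≤ (ℓ + 1) * c :=
            Nat.mul_le_mul_right c (by omega)
          omega
      · push_neg at hhit
        have hPS : ∀ z ∈ P.support, z ∈ R \ bagF R := fun z hz => ⟨hP z hz, hhit z hz⟩
        have hxS : x ∈ R \ bagF R := hPS x (Walk.start_mem_support _)
        have hCmem : cls G (R \ bagF R) x ∈ Reg (ℓ+1) := by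
          rw [hRegDef, RegF_succ, Set.mem_iUnion₂]
          exact ⟨R, hR, x, hxS, rfl⟩
        have hPsub : ∀ z ∈ P.support, z ∈ cls G (R \ bagF R) x := by
          intro z hz
          exact ⟨P.takeUntil z hz, fun w hw => hPS w (P.support_takeUntil_subset hz hw)⟩
        have hcardC : (cls G (R \ bagF R) x).ncard ≤ fuel := by
          have h1 := hbal R x hxS
          have h2 : 0 < (cls G (R \ bagF R) x).ncard :=
            (Set.ncard_pos (Set.toFinite _)).mpr ⟨x, mem_cls_self hxS⟩
          omega
        exact ih (cls G (R \ bagF R) x) (ℓ+1) hCmem hcardC x y P hPsub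
  -- the trees
  set n := Fintype.card V with hn'
  set Lmax := Nat.log 2 n with hLmax
  have hkpos : 0 < k := hk
  have hmpos : 0 < k * (Lmax + 1) := Nat.mul_pos hkpos (Nat.succ_pos _)
  have htree : ∀ (ℓ : ℕ) (j : Fin k), ∃ TT : SimpleGraph V, TT ≤ G ∧ TT.IsTree ∧
      ∀ R ∈ Reg ℓ, rootF R j ∈ R → ∀ x ∈ R, TT.dist x (rootF R j) ≤ wdist G R x (rootF R j) := by
    intro ℓ j
    obtain ⟨TT, h1, h2, h3⟩ := exists_level_tree (ι := {R : Set V // R ∈ Reg ℓ ∧ rootF R j ∈ R})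
      hG (fun a => a.1) (fun a => rootF a.1 j)
      (fun a b hab => RegF_disj ℓ a.1 a.2.1 b.1 b.2.1
        (fun hh => hab (Subtype.ext hh)))
      (fun a => a.2.2)
      (fun a x hx => RegF_conn hG ℓ a.1 a.2.1 x hx (rootF a.1 j) a.2.2)
    exact ⟨TT, h1, h2, fun R hR hroot x hx => h3 ⟨R, hR, hroot⟩ x hx⟩
  choose tr htr1 htr2 htr3 using htree
  have hnn : 2 ≤ n := hn2
  have hlog : ∀ d : ℕ, (2:ℕ)^d ≤ n → (d:ℝ) ≤ Real.logb 2 (n:ℝ) := by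
    intro d hd
    rw [Real.le_logb_iff_rpow_le (by norm_num : (1:ℝ) < 2)
      (by exact_mod_cast Nat.lt_of_lt_of_le Nat.zero_lt_two hnn)]
    rw [Real.rpow_natCast]
    exact_mod_cast hd
  refine ⟨k * (Lmax + 1), fun i => tr (i.val / k) ⟨i.val % k, Nat.mod_lt _ hkpos⟩, ?_, ?_, ?_⟩
  · have h2L : (2:ℕ)^Lmax ≤ n := Nat.pow_log_le_self 2 (by omega)
    have hlog1 : (Lmax : ℝ) ≤ Real.logb 2 (n:ℝ) := hlog Lmax h2L
    push_cast
    have h4 : (Lmax : ℝ) + 1 ≤ 1 + Real.logb 2 (n:ℝ) := by linarith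
    exact mul_le_mul_of_nonneg_left h4 (Nat.cast_nonneg k)
  · intro i
    exact ⟨htr1 _ _, htr2 _ _⟩
  · intro x y
    have hlogn0 : (0:ℝ) ≤ Real.logb 2 (n:ℝ) :=
      Real.logb_nonneg (by norm_num) (by exact_mod_cast Nat.one_le_of_lt hnn)
    have hcge : (0:ℝ) ≤ (c:ℝ) := Nat.cast_nonneg c
    by_cases hxy : x = y
    · subst hxy
      refine ⟨⟨0, hmpos⟩, ?_⟩
      rw [SimpleGraph.dist_self, SimpleGraph.dist_self]
      push_cast
      nlinarith
    · obtain ⟨P, hPlen⟩ := hG.exists_walk_length_eq_dist x y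
      have hR0 : Set.univ ∈ Reg 0 := by
        rw [hRegDef, RegF_zero]
        exact Set.mem_singleton _
      obtain ⟨ℓ'', d, R'', j, hR'', hxR, hyR, hrootin, hld, h2d, q₁, q₂, hs₁, hs₂, hlen⟩ :=
        main Set.univ.ncard Set.univ 0 hR0 le_rfl x y P (fun z _ => Set.mem_univ z)
      have hdL : d ≤ Lmax := by
        rw [hLmax]
        exact (Nat.le_log_iff_pow_le (by norm_num) (by omega)).mpr h2d
      have hℓL : ℓ'' ≤ Lmax := le_trans hld hdL
      have hklt : j.val + k * ℓ'' < k * (Lmax + 1) := by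
        have h1 : k * ℓ'' ≤ k * Lmax := Nat.mul_le_mul_left _ hℓL
        have h2 : k * (Lmax + 1) = k * Lmax + k := by ring
        have h3 := j.2
        omega
      refine ⟨⟨j.val + k * ℓ'', hklt⟩, ?_⟩
      have hdiv : (j.val + k * ℓ'') / k = ℓ'' := by
        rw [Nat.add_mul_div_left _ _ hkpos, Nat.div_eq_of_lt j.2]
        omega
      have hmod : (j.val + k * ℓ'') % k = j.val := by
        rw [Nat.add_mul_mod_self_left, Nat.mod_eq_of_lt j.2]
      have hfin : (⟨(j.val + k * ℓ'') % k, Nat.mod_lt _ hkpos⟩ : Fin k) = j :=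
        Fin.ext hmod
      have key : tr ((j.val + k * ℓ'') / k) ⟨(j.val + k * ℓ'') % k, Nat.mod_lt _ hkpos⟩
          = tr ℓ'' j := by rw [hdiv, hfin]
      simp only [key]
      have ht1 : (tr ℓ'' j).dist x (rootF R'' j) ≤ q₁.length :=
        le_trans (htr3 ℓ'' j R'' hR'' hrootin x hxR) (wdist_le q₁ hs₁)
      have ht2 : (tr ℓ'' j).dist y (rootF R'' j) ≤ q₂.length :=
        le_trans (htr3 ℓ'' j R'' hR'' hrootin y hyR) (wdist_le q₂ hs₂)
      have htri : (tr ℓ'' j).dist x y ≤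
          (tr ℓ'' j).dist x (rootF R'' j) + (tr ℓ'' j).dist (rootF R'' j) y :=
        (htr2 ℓ'' j).isConnected.dist_triangle
      have hcomm : (tr ℓ'' j).dist (rootF R'' j) y = (tr ℓ'' j).dist y (rootF R'' j) :=
        dist_comm
      have hNat : (tr ℓ'' j).dist x y ≤ G.dist x y + 2*((d+1)*c) := by
        rw [hcomm] at htri
        omega
      have hdR : (d:ℝ) ≤ Real.logb 2 (n:ℝ) := hlog d h2d
      have hcast : ((tr ℓ'' j).dist x y : ℝ) ≤ (G.dist x y : ℝ) + 2*(((d+1)*c : ℕ) : ℝ) := by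
        exact_mod_cast hNat
      refine le_trans hcast ?_
      have h5 : (((d+1)*c : ℕ) : ℝ) = ((d:ℝ)+1)*(c:ℝ) := by push_cast; ring
      rw [h5]
      have h6 : ((d:ℝ)+1)*(c:ℝ) ≤ (c:ℝ)*(1 + Real.logb 2 (n:ℝ)) := by nlinarith
      linarith
end
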